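/- arXiv:2209.00085 — 4 statements merged into one kernel-verified Lean document; each statement's English description precedes it below -/
import Mathlib

section
/- Let (a_n)_{n≥1}, (b_n)_{n≥1}, (c_n)_{n≥1} be sequences of nonzero complex numbers such that a_n = b_n·c_n for all n ≥ 1. Assume: (1) (a_n) satisfies a linear recurrence, i.e. there exist d ≥ 1 and complex numbers β_0, …, β_{d−1} such that a_{n+d} = β_{d−1}a_{n+d−1} + ⋯ + β_0 a_n for all sufficiently large n; (2) (b_n) is holonomic; (3) there exist an integer ϖ ≥ 1 and a finite set S of prime numbers such that c_m = c_n whenever m ≡ n (mod ϖ) and |m|_p = |n|_p for every p ∈ S; (4) there is a subring R of ℂ that is finitely generated as a ℤ-algebra and contains c_n for every n ≥ 1. Then the sequence (c_n)_{n≥1} takes on only finitely many values. -/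
open scoped BigOperators
open Filter

/-- The `p`-adic absolute value of the natural number `n`, normalised by `|p|ₚ = 1/p`. -/
noncomputable def padicAbs (p n : ℕ) : ℝ := ((p : ℝ) ^ padicValNat p n)⁻¹

/-- A gcd sequence: `x n = x (gcd n d)` for some `d ≥ 1` and all `n ≥ 1`. -/
def IsGcdSeq {α : Type*} (x : ℕ → α) : Prop :=
  ∃ d : ℕ, 1 ≤ d ∧ ∀ n : ℕ, 1 ≤ n → x n = x (Nat.gcd n d)

/-- A gcd sequence with a period coprime to `p`. -/
def IsGcdSeqCoprime {α : Type*} (x : ℕ → α) (p : ℕ) : Prop :=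
  ∃ d : ℕ, 1 ≤ d ∧ Nat.Coprime d p ∧ ∀ n : ℕ, 1 ≤ n → x n = x (Nat.gcd n d)

/-- No complex eigenvalue of the integer matrix `A` is a root of unity. -/
def NoRootOfUnityEigenvalue {k : ℕ} (A : Matrix (Fin k) (Fin k) ℤ) : Prop :=
  ∀ ξ : ℂ, ((A.map (Int.cast : ℤ → ℂ)).charpoly).IsRoot ξ → ∀ m : ℕ, 1 ≤ m → ξ ^ m ≠ 1

/-- The non-linear-recurrent factor `r n * ∏_{p ∈ S} |n|ₚ^{s p n} p^{-t p n · |n|ₚ⁻¹}`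
of a FAD-sequence. -/
noncomputable def fadFactor (S : Finset ℕ) (r : ℕ → ℝ) (s t : ℕ → ℕ → ℝ) (n : ℕ) : ℝ :=
  r n * ∏ p ∈ S, (padicAbs p n ^ s p n * (p : ℝ) ^ (-(t p n) * (padicAbs p n)⁻¹))

/-- `a` is a FAD-sequence with data `(A, S, c, r, s, t)`. -/
def IsFADWith (a : ℕ → ℤ) {k : ℕ} (A : Matrix (Fin k) (Fin k) ℤ)
    (S : Finset ℕ) (c : ℝ) (r : ℕ → ℝ) (s t : ℕ → ℕ → ℝ) : Prop :=
  NoRootOfUnityEigenvalue A ∧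
  (∀ p ∈ S, Nat.Prime p) ∧
  0 < c ∧
  IsGcdSeq r ∧ (∀ n : ℕ, 1 ≤ n → 0 < r n) ∧
  (∀ p ∈ S, IsGcdSeqCoprime (s p) p ∧ ∀ n : ℕ, 1 ≤ n → 0 ≤ s p n) ∧
  (∀ p ∈ S, IsGcdSeqCoprime (t p) p ∧ ∀ n : ℕ, 1 ≤ n → 0 ≤ t p n) ∧
  ∀ n : ℕ, 1 ≤ n →
    (a n : ℝ) = |((A ^ n - 1).det : ℝ)| * c ^ n * fadFactor S r s t n

/-- The number of fixed points of the `n`-th iterate of `f`, as an integer. -/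
noncomputable def fixCount {X : Type*} (f : X → X) (n : ℕ) : ℤ :=
  (Nat.card (Function.fixedPoints (f^[n])) : ℤ)

/-- The exponential entropy `Λ = c · ∏_{|ξᵢ| > 1} |ξᵢ|` of a FAD-system with data `(A, …, c, …)`,
the product running over the complex eigenvalues of `A` with multiplicity. -/
noncomputable def expEntropy {k : ℕ} (A : Matrix (Fin k) (Fin k) ℤ) (c : ℝ) : ℝ :=
  c * (((A.map (Int.cast : ℤ → ℂ)).charpoly.roots).map fun ξ => max 1 (‖ξ‖)).prod

/-- Hyperbolicity: no complex eigenvalue of `A` has modulus `1`. -/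
def Hyperbolic {k : ℕ} (A : Matrix (Fin k) (Fin k) ℤ) : Prop :=
  ∀ ξ ∈ ((A.map (Int.cast : ℤ → ℂ)).charpoly).roots, ‖ξ‖ ≠ 1

/-- The number `P_ℓ` of periodic orbits of `f` of length `ℓ`
(the set of points of minimal period `ℓ` decomposes into orbits of size `ℓ`). -/
noncomputable def orbitCount {X : Type*} (f : X → X) (l : ℕ) : ℕ :=
  Nat.card {x : X // Function.minimalPeriod f x = l} / l

/-- The orbit-counting function `π_f(N) = ∑_{ℓ ≤ N} P_ℓ`. -/
noncomputable def orbitCountBelow {X : Type*} (f : X → X) (N : ℕ) : ℕ :=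
  ∑ l ∈ Finset.Icc 1 N, orbitCount f l

/-- The set of accumulation points of a real sequence: limits of subsequences. -/
def accPoints (g : ℕ → ℝ) : Set ℝ :=
  {x : ℝ | ∃ φ : ℕ → ℕ, StrictMono φ ∧ Filter.Tendsto (fun i => g (φ i)) Filter.atTop (nhds x)}

/-- `(a n)_{n ≥ 1}` satisfies a linear recurrence for all sufficiently large `n`. -/
def SatisfiesLinearRecurrence (a : ℕ → ℂ) : Prop :=
  ∃ d : ℕ, 1 ≤ d ∧ ∃ β : Fin d → ℂ, ∃ N : ℕ, ∀ n : ℕ, N ≤ n →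
    a (n + d) = ∑ i : Fin d, β i * a (n + (i : ℕ))

/-- `(a n)_{n ≥ 1}` is holonomic: it satisfies a nontrivial recurrence with
polynomial coefficients. -/
def Holonomic (a : ℕ → ℂ) : Prop :=
  ∃ d : ℕ, ∃ q : Fin (d + 1) → Polynomial ℂ, (∃ i, q i ≠ 0) ∧
    ∀ n : ℕ, 1 ≤ n → ∑ i : Fin (d + 1), (q i).eval (n : ℂ) * a (n + (i : ℕ)) = 0

/-- The Taylor coefficients of `ζ(z) = exp (∑_{n ≥ 1} a n zⁿ / n)`, defined via the
logarithmic-derivative recursion `(n+1)·c_{n+1} = ∑_{k=0}^{n} a_{k+1} c_{n-k}`, `c₀ = 1`. -/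
noncomputable def zetaCoeff (a : ℕ → ℂ) : ℕ → ℂ
  | 0 => 1
  | n + 1 =>
    ((n : ℂ) + 1)⁻¹ * ∑ k ∈ Finset.range (n + 1), a (k + 1) * zetaCoeff a (n - k)
  termination_by n => n
  decreasing_by omega

/-- The zeta function `ζ(z) = exp (∑_{n ≥ 1} a n zⁿ / n)` of a sequence,
as a formal power series. -/
noncomputable def zetaPS (a : ℕ → ℂ) : PowerSeries ℂ := PowerSeries.mk (zetaCoeff a)

/-- A formal power series over `ℂ` is the expansion of a rational function of `ℂ(z)`. -/
def IsExpansionOfRationalC (F : PowerSeries ℂ) : Prop :=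
  ∃ P Q : Polynomial ℂ, Q ≠ 0 ∧ F * (Q : PowerSeries ℂ) = (P : PowerSeries ℂ)

/-- A formal power series over `ℂ` is the expansion of a rational function of `ℚ(z)`. -/
def IsExpansionOfRationalOverQ (F : PowerSeries ℂ) : Prop :=
  ∃ P Q : Polynomial ℚ, Q ≠ 0 ∧
    F * ((Q.map (algebraMap ℚ ℂ) : Polynomial ℂ) : PowerSeries ℂ) =
      ((P.map (algebraMap ℚ ℂ) : Polynomial ℂ) : PowerSeries ℂ)

/-- A formal power series is algebraic over `ℂ(z)` (equivalently over `ℂ[z]`):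
it satisfies a nonzero polynomial equation with coefficients in `ℂ[z]`. -/
def AlgebraicOverRatFuncs (F : PowerSeries ℂ) : Prop :=
  ∃ q : Polynomial (Polynomial ℂ), q ≠ 0 ∧
    Polynomial.eval₂ Polynomial.coeToPowerSeries.ringHom F q = 0

/-- An integer sequence is realisable if it is the fixed point count of some
set-theoretic dynamical system. -/
def Realisable (a : ℕ → ℤ) : Prop :=
  ∃ (X : Type) (f : X → X), ∀ n : ℕ, 1 ≤ n →
    (Function.fixedPoints (f^[n])).Finite ∧
    a n = (Nat.card (Function.fixedPoints (f^[n])) : ℤ)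

/-- The oscillating factor `u_n = ∏_{|ξᵢ| = 1} (ξᵢⁿ − 1)` over the eigenvalues of `A`
of modulus one. -/
noncomputable def uSeq {k : ℕ} (A : Matrix (Fin k) (Fin k) ℤ) (n : ℕ) : ℂ :=
  ((((A.map (Int.cast : ℤ → ℂ)).charpoly.roots).filter fun ξ => ‖ξ‖ = 1).map
    fun ξ => ξ ^ n - 1).prod

/-!
Since `a` satisfies a linear recurrence, it is eventually an exponential polynomial
`∑ p_λ(n) λⁿ`. Let `∑_{i ≤ d} qᵢ(n) b(n + i) = 0` be the holonomic relation of `b`, with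
`q_{i₀} ≠ 0`, and fix `n₀ > d`. As `c n` only depends on `n mod ϖ` and on the valuations `v_p(n)`,
`p ∈ S`, there are `r` and `M > 0` with `c (r + i₀) = c n₀`, with `c (r + i + M t) = c (r + i)`
for all `i ≤ d` and `t`, and with `v_p(r + i)` bounded independently of `n₀` for `i ≠ i₀`, so
that these `c (r + i)` lie in a finite set. Along `r + Mℕ` the relation of `b = a / c` becomes
`∑ qᵢ(n) c(r + i)⁻¹ a(n + i) = 0`. Its left side is an exponential polynomial in `n`, so by
uniqueness of such expansions it vanishes on the whole class of `r` modulo a `W` depending only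
on the `λ`. At a point of that class where `q_{i₀}` and `a` do not vanish, the relation
determines `c n₀` from `r mod W` and the finitely many possible values of `c (r + i)`, `i ≠ i₀`.
-/

open Polynomial

namespace HadamardQuotient

/-! ### Exponential polynomials -/

noncomputable def expPoly (L : Finset ℂ) (p : ℂ → ℂ[X]) (n : ℕ) : ℂ :=
  ∑ l ∈ L, (p l).eval (n : ℂ) * l ^ n

def IsExpPoly (f : ℕ → ℂ) : Prop :=
  ∃ (L : Finset ℂ) (p : ℂ → ℂ[X]), 0 ∉ L ∧ f =ᶠ[atTop] expPoly L p

def shiftSub (μ : ℂ) (f : ℕ → ℂ) (n : ℕ) : ℂ := f (n + 1) - μ * f n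

noncomputable def polyShiftSub (u v : ℂ) : ℂ[X] →ₗ[ℂ] ℂ[X] := u • taylor 1 - v • LinearMap.id

lemma polyShiftSub_apply (u v : ℂ) (r : ℂ[X]) :
    polyShiftSub u v r = u • taylor 1 r - v • r := rfl

lemma expPoly_shiftSub (L : Finset ℂ) (p : ℂ → ℂ[X]) (μ : ℂ) :
    shiftSub μ (expPoly L p) = expPoly L (fun l ↦ polyShiftSub l μ (p l)) := by
  funext n
  simp only [shiftSub, expPoly, polyShiftSub_apply, eval_sub, eval_smul, taylor_eval,
    smul_eq_mul, Finset.mul_sum, ← Finset.sum_sub_distrib]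
  refine Finset.sum_congr rfl fun l _ ↦ ?_
  push_cast
  ring

lemma polyShiftSub_injective {u v : ℂ} (huv : u ≠ v) : Function.Injective (polyShiftSub u v) := by
  refine (injective_iff_map_eq_zero _).2 fun r hr ↦ ?_
  have htop : (taylor 1 r).coeff r.natDegree = r.leadingCoeff := by
    rw [← natDegree_taylor r 1, ← leadingCoeff, leadingCoeff_taylor]
  have := congrArg (coeff · r.natDegree) hr
  simp only [polyShiftSub_apply, coeff_sub, coeff_smul, htop, smul_eq_mul, coeff_zero,
    coeff_natDegree, ← sub_mul, mul_eq_zero, sub_eq_zero] at this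
  exact leadingCoeff_eq_zero.1 (this.resolve_left huv)

lemma eval_polyShiftSub_self_iterate (u : ℂ) (r : ℂ[X]) (k : ℕ) (x : ℂ) :
    ((polyShiftSub u u)^[k] r).eval x = u ^ k * (fwdDiff 1)^[k] r.eval x := by
  induction k generalizing x with
  | zero => simp
  | succ k ih =>
    rw [Function.iterate_succ_apply', Function.iterate_succ_apply', polyShiftSub_apply]
    simp only [eval_sub, eval_smul, taylor_eval, ih, smul_eq_mul, fwdDiff]
    ring

lemma polyShiftSub_self_iterate_eq_zero (u : ℂ) {r : ℂ[X]} {k : ℕ} (hk : r.natDegree < k) :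
    (polyShiftSub u u)^[k] r = 0 := by
  refine Polynomial.funext fun x ↦ ?_
  simp [eval_polyShiftSub_self_iterate, fwdDiff_iter_eq_zero_of_degree_lt hk]

lemma surjective_of_forall_exists_coeff_ne_zero {K : Type*} [Field K] (f : K[X] →ₗ[K] K[X])
    (h : ∀ k, ∃ q, (f q).natDegree ≤ k ∧ (f q).coeff k ≠ 0) : Function.Surjective f := by
  intro p
  induction hk : p.natDegree using Nat.strong_induction_on generalizing p with
  | _ k ih =>
  obtain ⟨q, hqk, hq⟩ := h k
  set c := p.coeff k / (f q).coeff k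
  set p' := p - c • f q
  have hp' : p'.coeff k = 0 := by simp [p', c, hq]
  have hp'k : p'.natDegree ≤ k := (natDegree_sub_le _ _).trans
    (max_le hk.le ((natDegree_smul_le _ _).trans hqk))
  suffices ∃ r, f r = p' by
    obtain ⟨r, hr⟩ := this
    exact ⟨r + c • q, by rw [map_add, map_smul, hr, sub_add_cancel]⟩
  by_cases hp'0 : p' = 0
  · exact ⟨0, by simp [hp'0]⟩
  refine ih _ (lt_of_le_of_ne hp'k fun h ↦ ?_) p' rfl
  exact hp'0 (leadingCoeff_eq_zero.1 (by rwa [leadingCoeff, h]))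

lemma coeff_polyShiftSub_X_pow (u v : ℂ) (j i : ℕ) :
    (polyShiftSub u v (X ^ j)).coeff i = u * j.choose i - v * if i = j then 1 else 0 := by
  simp [polyShiftSub_apply, coeff_X_add_one_pow, coeff_X_pow]

lemma polyShiftSub_surjective {u : ℂ} (hu : u ≠ 0) (v : ℂ) :
    Function.Surjective (polyShiftSub u v) := by
  refine surjective_of_forall_exists_coeff_ne_zero _ fun k ↦ ?_
  rcases eq_or_ne u v with rfl | huv
  -- for `u = v` the operator lowers degrees by one
  · refine ⟨X ^ (k + 1), natDegree_le_iff_coeff_eq_zero.2 fun i hi ↦ ?_, ?_⟩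
    · rcases (Nat.succ_le_of_lt hi).eq_or_lt with rfl | hi'
      · simp [coeff_polyShiftSub_X_pow]
      · simp [coeff_polyShiftSub_X_pow, Nat.choose_eq_zero_of_lt hi', hi'.ne']
    · simp [coeff_polyShiftSub_X_pow, hu, Nat.cast_add_one_ne_zero]
  · refine ⟨X ^ k, natDegree_le_iff_coeff_eq_zero.2 fun i hi ↦ ?_, ?_⟩
    · simp [coeff_polyShiftSub_X_pow, Nat.choose_eq_zero_of_lt hi, hi.ne']
    · simpa [coeff_polyShiftSub_X_pow, sub_eq_zero] using huv

/-! ### Uniqueness of exponential-polynomial expansions -/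

lemma eventually_eval_ne_zero {q : ℂ[X]} (hq : q ≠ 0) : ∀ᶠ n : ℕ in atTop, q.eval (n : ℂ) ≠ 0 := by
  rw [← Nat.cofinite_eq_atTop, Filter.eventually_cofinite]
  refine ((q.roots.toFinset.finite_toSet).preimage Nat.cast_injective.injOn).subset fun n hn ↦ ?_
  simpa [hq] using hn

lemma eq_zero_of_eval_mul_pow {q : ℂ[X]} {μ : ℂ} (hμ : μ ≠ 0)
    (h : ∀ᶠ n : ℕ in atTop, q.eval (n : ℂ) * μ ^ n = 0) : q = 0 := by
  by_contra hq
  obtain ⟨n, hn, hq'⟩ := (h.and (eventually_eval_ne_zero hq)).exists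
  exact mul_ne_zero hq' (pow_ne_zero n hμ) hn

lemma expPoly_shiftSub_iterate (L : Finset ℂ) (p : ℂ → ℂ[X]) (μ : ℂ) (k : ℕ) :
    (shiftSub μ)^[k] (expPoly L p) = expPoly L (fun l ↦ (polyShiftSub l μ)^[k] (p l)) := by
  induction k with
  | zero => rfl
  | succ k ih =>
    simp only [Function.iterate_succ_apply', ih, expPoly_shiftSub]

lemma shiftSub_iterate_eventuallyEq_zero {f : ℕ → ℂ} (hf : f =ᶠ[atTop] 0) (μ : ℂ) (k : ℕ) :
    (shiftSub μ)^[k] f =ᶠ[atTop] 0 := by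
  induction k with
  | zero => exact hf
  | succ k ih =>
    rw [Function.iterate_succ_apply']
    filter_upwards [ih, (tendsto_add_atTop_nat 1).eventually ih] with n h0 h1
    simp [shiftSub, h0, h1]

theorem eq_zero_of_expPoly_eventuallyEq_zero {L : Finset ℂ} (hL : 0 ∉ L) {p : ℂ → ℂ[X]}
    (h : expPoly L p =ᶠ[atTop] 0) : ∀ l ∈ L, p l = 0 := by
  induction L using Finset.induction_on generalizing p with
  | empty => simp
  | insert μ L hμL ih =>
    have hμ : μ ≠ 0 := fun h ↦ hL (h ▸ Finset.mem_insert_self μ L)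
    -- `(E - μ)ᵏ` with `k > deg p_μ` kills the `μ`-term and acts injectively on the others.
    set k := (p μ).natDegree + 1
    set p' : ℂ → ℂ[X] := fun l ↦ (polyShiftSub l μ)^[k] (p l)
    have hp'μ : p' μ = 0 := polyShiftSub_self_iterate_eq_zero μ (Nat.lt_succ_self _)
    have hp' : expPoly (insert μ L) p' =ᶠ[atTop] 0 := by
      rw [← expPoly_shiftSub_iterate]
      exact shiftSub_iterate_eventuallyEq_zero h μ k
    have hrestrict : expPoly (insert μ L) p' = expPoly L p' := by
      funext n
      simp [expPoly, Finset.sum_insert hμL, hp'μ]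
    rw [hrestrict] at hp'
    have hL' : ∀ l ∈ L, p l = 0 := fun l hl ↦
      ((polyShiftSub_injective (by rintro rfl; exact hμL hl)).iterate k).eq_iff'
        (Function.iterate_fixed (map_zero _) k) |>.1
          (ih (fun h ↦ hL (Finset.mem_insert_of_mem h)) hp' l hl)
    have hpμ : p μ = 0 := by
      refine eq_zero_of_eval_mul_pow hμ (h.mono fun n hn ↦ ?_)
      rw [Pi.zero_apply, expPoly, Finset.sum_insert hμL, Finset.sum_eq_zero
        (fun l hl ↦ by rw [hL' l hl, eval_zero, zero_mul]), add_zero] at hn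
      exact hn
    simpa [hpμ] using hL'

/-! ### Solutions of linear recurrences -/

def shift : Module.End ℂ (ℕ → ℂ) := LinearMap.funLeft ℂ ℂ (· + 1)

lemma shift_pow_apply (k : ℕ) (f : ℕ → ℂ) (n : ℕ) : (shift ^ k) f n = f (n + k) := by
  induction k generalizing n with
  | zero => rfl
  | succ k ih =>
    rw [pow_succ', Module.End.mul_apply]
    exact (ih (n + 1)).trans (by rw [add_right_comm, add_assoc])

lemma aeval_shift_X_sub_C (μ : ℂ) (f : ℕ → ℂ) : aeval shift (X - C μ) f = shiftSub μ f := by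
  funext n
  simp [shiftSub, shift, LinearMap.funLeft_apply]

lemma expPoly_add (L : Finset ℂ) (p q : ℂ → ℂ[X]) :
    expPoly L p + expPoly L q = expPoly L (p + q) := by
  funext n
  simp [expPoly, add_mul, Finset.sum_add_distrib]

lemma expPoly_eq_of_subset {L L' : Finset ℂ} (h : L ⊆ L') (p : ℂ → ℂ[X]) :
    expPoly L p = expPoly L' (fun l ↦ if l ∈ L then p l else 0) := by
  funext n
  rw [expPoly, expPoly, ← Finset.sum_subset h fun l _ hl ↦ by simp [hl]]
  exact Finset.sum_congr rfl fun l hl ↦ by simp [hl]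

lemma IsExpPoly.congr {f g : ℕ → ℂ} (hf : IsExpPoly f) (hfg : f =ᶠ[atTop] g) : IsExpPoly g :=
  let ⟨L, p, hL, h⟩ := hf; ⟨L, p, hL, hfg.symm.trans h⟩

lemma IsExpPoly.add {f g : ℕ → ℂ} (hf : IsExpPoly f) (hg : IsExpPoly g) : IsExpPoly (f + g) := by
  obtain ⟨L, p, hL, hfp⟩ := hf
  obtain ⟨L', p', hL', hgp'⟩ := hg
  refine ⟨L ∪ L', fun l ↦ (if l ∈ L then p l else 0) + (if l ∈ L' then p' l else 0),
    by simp [hL, hL'], (hfp.add hgp').trans (.of_eq ?_)⟩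
  rw [expPoly_eq_of_subset (show L ⊆ L ∪ L' from Finset.subset_union_left),
    expPoly_eq_of_subset (show L' ⊆ L ∪ L' from Finset.subset_union_right), expPoly_add]
  rfl

lemma isExpPoly_const_mul_pow (c μ : ℂ) : IsExpPoly (fun n ↦ c * μ ^ n) := by
  rcases eq_or_ne μ 0 with rfl | hμ
  · refine ⟨∅, 0, by simp, (eventually_ge_atTop 1).mono fun n hn ↦ ?_⟩
    simp [expPoly, zero_pow (Nat.one_le_iff_ne_zero.1 hn)]
  · exact ⟨{μ}, fun _ ↦ C c, by simpa using hμ.symm, .of_eq (by funext n; simp [expPoly])⟩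

lemma exists_eventuallyEq_mul_pow {f : ℕ → ℂ} {μ : ℂ} (h : shiftSub μ f =ᶠ[atTop] 0) :
    ∃ c, f =ᶠ[atTop] fun n ↦ c * μ ^ n := by
  obtain ⟨N, hN⟩ := eventually_atTop.1 h
  have hgeom : ∀ k, f (N + k) = f N * μ ^ k := by
    intro k
    induction k with
    | zero => simp
    | succ k ih =>
      have := hN (N + k) (Nat.le_add_right N k)
      simp only [shiftSub, Pi.zero_apply, sub_eq_zero] at this
      rw [← add_assoc, this, ih, pow_succ]
      ring
  rcases eq_or_ne μ 0 with rfl | hμ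
  · refine ⟨0, (eventually_gt_atTop N).mono fun n hn ↦ ?_⟩
    obtain ⟨k, rfl⟩ := Nat.exists_eq_add_of_lt hn
    rw [add_assoc, hgeom]
    simp
  · refine ⟨f N / μ ^ N, (eventually_ge_atTop N).mono fun n hn ↦ ?_⟩
    obtain ⟨k, rfl⟩ := Nat.exists_eq_add_of_le hn
    show f (N + k) = f N / μ ^ N * μ ^ (N + k)
    rw [hgeom, pow_add]
    field_simp

lemma IsExpPoly.of_shiftSub {f : ℕ → ℂ} {μ : ℂ} (hf : IsExpPoly (shiftSub μ f)) : IsExpPoly f := by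
  obtain ⟨L, p, hL, hfp⟩ := hf
  -- a particular solution `x = expPoly L r` of `x (n + 1) - μ x n = expPoly L p n`
  have hsol : ∀ l ∈ L, ∃ r, polyShiftSub l μ r = p l := fun l hl ↦
    polyShiftSub_surjective (by rintro rfl; exact hL hl) μ (p l)
  choose! r hr using hsol
  have hx : shiftSub μ (expPoly L r) = expPoly L p := by
    rw [expPoly_shiftSub]
    funext n
    exact Finset.sum_congr rfl fun l hl ↦ by simp only [hr l hl]
  have hsub : shiftSub μ (f - expPoly L r) =ᶠ[atTop] 0 := by
    have : shiftSub μ (f - expPoly L r) = shiftSub μ f - shiftSub μ (expPoly L r) := by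
      funext n; simp only [shiftSub, Pi.sub_apply]; ring
    rw [this, hx]
    exact hfp.sub_eq
  obtain ⟨c, hc⟩ := exists_eventuallyEq_mul_pow hsub
  refine ((isExpPoly_const_mul_pow c μ).add ⟨L, r, hL, .rfl⟩).congr ?_
  filter_upwards [hc] with n hn
  simp [← hn]

lemma isExpPoly_of_aeval_shift {P : ℂ[X]} (hP : P ≠ 0) {f : ℕ → ℂ}
    (hf : aeval shift P f =ᶠ[atTop] 0) : IsExpPoly f := by
  rw [← C_leadingCoeff_mul_prod_multiset_X_sub_C (p := P) IsAlgClosed.card_roots_eq_natDegree,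
    map_mul, Module.End.mul_apply, aeval_C] at hf
  replace hf : aeval shift (P.roots.map (X - C ·)).prod f =ᶠ[atTop] 0 :=
    hf.mono fun n hn ↦ by simpa [leadingCoeff_ne_zero.2 hP] using hn
  generalize P.roots = s at hf
  induction s using Multiset.induction_on generalizing f with
  | empty =>
    refine ⟨∅, 0, by simp, (by simpa using hf : f =ᶠ[atTop] 0).trans (.of_eq ?_)⟩
    funext n
    simp [expPoly]
  | cons μ s ih =>
    rw [Multiset.map_cons, Multiset.prod_cons, mul_comm, map_mul, Module.End.mul_apply,
      aeval_shift_X_sub_C] at hf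
    exact (ih hf).of_shiftSub

lemma SatisfiesLinearRecurrence.isExpPoly {a : ℕ → ℂ} (ha : SatisfiesLinearRecurrence a) :
    IsExpPoly a := by
  obtain ⟨d, -, β, N, hN⟩ := ha
  refine isExpPoly_of_aeval_shift (monic_X_pow_sub (degree_sum_fin_lt β)).ne_zero
    (eventually_atTop.2 ⟨N, fun n hn ↦ ?_⟩)
  simp [shift_pow_apply, hN n hn, Algebra.smul_def]

/-! ### Vanishing along arithmetic progressions -/

lemma eventuallyEq_expPoly_sum {ι : Type*} [Fintype ι] {a : ℕ → ℂ} {L : Finset ℂ}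
    {p : ℂ → ℂ[X]} (ha : a =ᶠ[atTop] expPoly L p) (q : ι → ℂ[X]) (w : ι → ℂ) (k : ι → ℕ) :
    (fun n : ℕ ↦ ∑ i, (q i).eval (n : ℂ) * w i * a (n + k i)) =ᶠ[atTop]
      expPoly L (fun l ↦ ∑ i, (w i * l ^ k i) • (q i * taylor (k i : ℂ) (p l))) := by
  have hshift : ∀ᶠ n in atTop, ∀ i, a (n + k i) = expPoly L p (n + k i) :=
    eventually_all.2 fun i ↦ (tendsto_add_atTop_nat (k i)).eventually ha
  filter_upwards [hshift] with n hn
  simp only [hn, expPoly, Finset.mul_sum, eval_finsetSum, Finset.sum_mul]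
  rw [Finset.sum_comm]
  refine Finset.sum_congr rfl fun l _ ↦ Finset.sum_congr rfl fun i _ ↦ ?_
  simp only [eval_smul, eval_mul, taylor_eval, smul_eq_mul, pow_add]
  push_cast
  ring

lemma exists_pow_eq_pow_of_pow_eq_pow {K : Type*} [Field K] (L : Finset K) :
    ∃ W, 0 < W ∧ ∀ l ∈ L, ∀ l' ∈ L, ∀ m, 0 < m → l ^ m = l' ^ m → l ^ W = l' ^ W := by
  classical
  set R := (L ×ˢ L).filter fun z ↦ IsOfFinOrder (z.1 / z.2)
  refine ⟨∏ z ∈ R, orderOf (z.1 / z.2), Finset.prod_pos fun z hz ↦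
    (Finset.mem_filter.1 hz).2.orderOf_pos, fun l hl l' hl' m hm hpow ↦ ?_⟩
  rcases eq_or_ne l' 0 with rfl | hl'0
  · rw [zero_pow hm.ne', pow_eq_zero_iff hm.ne'] at hpow
    rw [hpow]
  have hfin : IsOfFinOrder (l / l') :=
    isOfFinOrder_iff_pow_eq_one.2 ⟨m, hm, by rw [div_pow, hpow, div_self (pow_ne_zero m hl'0)]⟩
  have hdvd : orderOf (l / l') ∣ ∏ z ∈ R, orderOf (z.1 / z.2) :=
    Finset.dvd_prod_of_mem _ (show (l, l') ∈ R from
      Finset.mem_filter.2 ⟨Finset.mem_product.2 ⟨hl, hl'⟩, hfin⟩)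
  have := orderOf_dvd_iff_pow_eq_one.1 hdvd
  rwa [div_pow, div_eq_one_iff_eq (pow_ne_zero _ hl'0)] at this

lemma expPoly_add_mul (L : Finset ℂ) (p : ℂ → ℂ[X]) (r M t : ℕ) :
    expPoly L p (r + M * t) = expPoly (L.image (· ^ M))
      (fun κ ↦ ∑ l ∈ L with l ^ M = κ, C (l ^ r) * (p l).comp (C (r : ℂ) + C (M : ℂ) * X)) t := by
  simp only [expPoly, eval_finsetSum, Finset.sum_mul]
  rw [← Finset.sum_fiberwise_of_maps_to (fun l hl ↦ Finset.mem_image_of_mem (· ^ M) hl)]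
  refine Finset.sum_congr rfl fun κ _ ↦ Finset.sum_congr rfl fun l hl ↦ ?_
  rw [← (Finset.mem_filter.1 hl).2]
  simp only [eval_mul, eval_C, eval_comp, eval_add, eval_X]
  push_cast
  rw [pow_add, pow_mul]
  ring

lemma pow_mul_pow_eq_of_modEq {K : Type*} [CommMonoid K] {x y : K} {W n r : ℕ}
    (hxy : x ^ W = y ^ W) (hnr : n ≡ r [MOD W]) : x ^ n * y ^ r = y ^ n * x ^ r := by
  rw [← Nat.div_add_mod n W, ← Nat.div_add_mod r W, hnr, pow_add, pow_add, pow_add, pow_add,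
    pow_mul, pow_mul, pow_mul, pow_mul, hxy]
  ac_rfl

theorem expPoly_eq_zero_of_arithProg {L : Finset ℂ} (hL : 0 ∉ L) {W : ℕ}
    (hW : ∀ l ∈ L, ∀ l' ∈ L, ∀ m, 0 < m → l ^ m = l' ^ m → l ^ W = l' ^ W)
    {M : ℕ} (hM : 0 < M) {p : ℂ → ℂ[X]} {r : ℕ}
    (h : ∀ᶠ t in atTop, expPoly L p (r + M * t) = 0) {n : ℕ} (hn : n ≡ r [MOD W]) :
    expPoly L p n = 0 := by
  set q : ℂ → ℂ[X] := fun κ ↦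
    ∑ l ∈ L with l ^ M = κ, C (l ^ r) * (p l).comp (C (r : ℂ) + C (M : ℂ) * X)
  have hq : ∀ κ ∈ L.image (· ^ M), q κ = 0 := by
    refine eq_zero_of_expPoly_eventuallyEq_zero (fun h0 ↦ ?_) ?_
    · obtain ⟨l, hl, hl0⟩ := Finset.mem_image.1 h0
      exact hL (pow_eq_zero_iff hM.ne' |>.1 hl0 ▸ hl)
    · filter_upwards [h] with t ht
      rw [Pi.zero_apply, ← expPoly_add_mul, ht]
  rw [expPoly, ← Finset.sum_fiberwise_of_maps_to (fun l hl ↦ Finset.mem_image_of_mem (· ^ M) hl)]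
  refine Finset.sum_eq_zero fun κ hκ ↦ ?_
  obtain ⟨l₀, hl₀, rfl⟩ := Finset.mem_image.1 hκ
  have hl₀0 : l₀ ^ r ≠ 0 := pow_ne_zero r fun h ↦ hL (h ▸ hl₀)
  -- within a fibre `lⁿ / l₀ⁿ = lʳ / l₀ʳ`, so the fibre sum is `l₀ⁿ⁻ʳ` times `q κ` at `(n - r) / M`
  have hfibre : (∑ l ∈ L with l ^ M = l₀ ^ M, (p l).eval (n : ℂ) * l ^ n) * l₀ ^ r =
      (q (l₀ ^ M)).eval (((n : ℂ) - r) / M) * l₀ ^ n := by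
    simp only [q, eval_finsetSum, eval_mul, eval_C, eval_comp, eval_add, eval_X,
      Finset.sum_mul]
    refine Finset.sum_congr rfl fun l hl ↦ ?_
    obtain ⟨hlL, hlM⟩ := Finset.mem_filter.1 hl
    have := pow_mul_pow_eq_of_modEq (hW l hlL l₀ hl₀ M hM hlM) hn
    have hMC : (M : ℂ) ≠ 0 := by exact_mod_cast hM.ne'
    rw [show (r : ℂ) + M * ((n - r) / M) = n by field_simp; ring]
    linear_combination (p l).eval (n : ℂ) * this
  rw [hq _ hκ, eval_zero, zero_mul] at hfibre
  exact (mul_eq_zero.1 hfibre).resolve_right hl₀0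

/-! ### Residues and p-adic valuations -/

lemma padicValNat_add_of_mul_dvd {p x y : ℕ} [Fact p.Prime] (hx : x ≠ 0) (h : p * x ∣ y) :
    padicValNat p (x + y) = padicValNat p x := by
  have hy : p ^ (padicValNat p x + 1) ∣ y :=
    (pow_succ' p _ ▸ mul_dvd_mul_left p pow_padicValNat_dvd).trans h
  refine le_antisymm (Nat.le_of_lt_succ ?_) ((padicValNat_dvd_iff_le (by omega)).1
    (dvd_add pow_padicValNat_dvd ((pow_dvd_pow p (Nat.le_succ _)).trans hy)))
  by_contra hle
  refine pow_succ_padicValNat_not_dvd hx ((Nat.dvd_add_left hy).1 ?_)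
  exact (padicValNat_dvd_iff_le (by omega)).2 (not_lt.1 hle)

lemma min_padicValNat_add_lt {p : ℕ} [Fact p.Prime] (r : ℕ) {i j d : ℕ} (hi : i ≤ d) (hj : j ≤ d)
    (hij : i ≠ j) : min (padicValNat p (r + i)) (padicValNat p (r + j)) < d := by
  wlog hlt : i < j generalizing i j
  · rw [min_comm]; exact this hj hi hij.symm (by omega)
  set m := min (padicValNat p (r + i)) (padicValNat p (r + j))
  have hdvd : p ^ m ∣ j - i := by
    have := Nat.dvd_sub
      ((pow_dvd_pow p (min_le_right _ _)).trans (pow_padicValNat_dvd (n := r + j)))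
      ((pow_dvd_pow p (min_le_left _ _)).trans (pow_padicValNat_dvd (n := r + i)))
    rwa [Nat.add_sub_add_left] at this
  have := Nat.le_of_dvd (by omega) hdvd
  have := Nat.lt_pow_self (n := m) (Fact.out : p.Prime).one_lt
  omega

lemma pow_le_sub_of_pow_dvd_add_mul {p m t s s' k : ℕ} [Fact p.Prime] (hm : m ≠ 0)
    (hs : p ^ (padicValNat p m + k) ∣ t + s * m) (hs' : p ^ (padicValNat p m + k) ∣ t + s' * m)
    (hlt : s < s') : p ^ k ≤ s' - s := by
  have hdvd : p ^ (padicValNat p m + k) ∣ (s' - s) * m := by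
    have := Nat.dvd_sub hs' hs
    rwa [Nat.add_sub_add_left, ← Nat.sub_mul] at this
  rw [padicValNat_dvd_iff_le (mul_ne_zero (by omega) hm), padicValNat.mul (by omega) hm] at hdvd
  exact Nat.le_of_dvd (by omega) ((padicValNat_dvd_iff_le (by omega)).2 (by omega))

/-- For given `p` and `t` the bad `s` form one residue class mod `pᵏ`, so among the
`|S| |T| + 1 ≤ 2ᵏ` candidates `s ≤ |S| |T|` one is good for all `p` and `t`. -/
lemma exists_forall_not_pow_dvd_add_mul {S : Finset ℕ} (hS : ∀ p ∈ S, p.Prime) {m : ℕ}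
    (hm : m ≠ 0) (T : Finset ℕ) {k : ℕ} (hk : S.card * T.card < 2 ^ k) :
    ∃ s, ∀ p ∈ S, ∀ t ∈ T, ¬ p ^ (padicValNat p m + k) ∣ t + s * m := by
  classical
  set bad : ℕ × ℕ → Finset ℕ := fun pt ↦
    (Finset.range (S.card * T.card + 1)).filter fun s ↦
      pt.1 ^ (padicValNat pt.1 m + k) ∣ pt.2 + s * m
  have hbad : ∀ pt ∈ S ×ˢ T, (bad pt).card ≤ 1 := by
    rintro ⟨p, t⟩ hpt
    have := Fact.mk (hS p (Finset.mem_product.1 hpt).1)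
    refine Finset.card_le_one.2 fun s hs s' hs' ↦ ?_
    simp only [bad, Finset.mem_filter, Finset.mem_range] at hs hs'
    have hpk : 2 ^ k ≤ p ^ k := Nat.pow_le_pow_left (Fact.out : p.Prime).two_le k
    by_contra hne
    rcases Nat.lt_or_gt_of_ne hne with hlt | hlt
    · have := pow_le_sub_of_pow_dvd_add_mul hm hs.2 hs'.2 hlt; omega
    · have := pow_le_sub_of_pow_dvd_add_mul hm hs'.2 hs.2 hlt; omega
  have hcard : ((S ×ˢ T).biUnion bad).card < (Finset.range (S.card * T.card + 1)).card := by
    calc ((S ×ˢ T).biUnion bad).card ≤ ∑ pt ∈ S ×ˢ T, (bad pt).card := Finset.card_biUnion_le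
      _ ≤ ∑ _pt ∈ S ×ˢ T, 1 := Finset.sum_le_sum hbad
      _ < _ := by simp
  obtain ⟨s, hs, hsbad⟩ := Finset.exists_mem_notMem_of_card_lt_card hcard
  refine ⟨s, fun p hp t ht hdvd ↦ hsbad (Finset.mem_biUnion.2 ⟨(p, t), ?_, ?_⟩)⟩
  · exact Finset.mem_product.2 ⟨hp, ht⟩
  · exact Finset.mem_filter.2 ⟨hs, hdvd⟩

lemma finite_image_of_factor {α β γ : Type*} {f : α → β} {g : α → γ} {A : Set α}
    (hg : (g '' A).Finite) (hfg : ∀ a ∈ A, ∀ b ∈ A, g a = g b → f a = f b) : (f '' A).Finite := by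
  refine (hg.biUnion fun τ _ ↦ Set.Subsingleton.finite (s := f '' {a ∈ A | g a = τ}) ?_).subset ?_
  · rintro _ ⟨a, ⟨ha, rfl⟩, rfl⟩ _ ⟨b, ⟨hb, hab⟩, rfl⟩
    exact hfg a ha b hb hab.symm
  · rintro _ ⟨a, ha, rfl⟩
    exact Set.mem_biUnion (Set.mem_image_of_mem g ha) ⟨a, ⟨ha, rfl⟩, rfl⟩

def DeterminedByResidueAndValuations (c : ℕ → ℂ) (ϖ : ℕ) (S : Finset ℕ) : Prop :=
  ∀ m n : ℕ, 1 ≤ m → 1 ≤ n → m % ϖ = n % ϖ →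
    (∀ p ∈ S, padicValNat p m = padicValNat p n) → c m = c n

namespace DeterminedByResidueAndValuations

variable {c : ℕ → ℂ} {ϖ : ℕ} {S : Finset ℕ}

lemma add_eq (hc : DeterminedByResidueAndValuations c ϖ S) (hS : ∀ p ∈ S, p.Prime) {x y : ℕ}
    (hx : 1 ≤ x) (h : ϖ * (∏ p ∈ S, p) * x ∣ y) : c (x + y) = c x := by
  refine hc _ _ (by omega) hx ?_ fun p hp ↦ ?_
  · obtain ⟨t, rfl⟩ := (Dvd.intro _ (mul_assoc ϖ _ x).symm).trans h
    exact Nat.add_mul_mod_self_left x ϖ t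
  · have := Fact.mk (hS p hp)
    refine padicValNat_add_of_mul_dvd (by omega) ((mul_dvd_mul_right ?_ x).trans h)
    exact (Finset.dvd_prod_of_mem _ hp).mul_left ϖ

lemma finite_image_setOf_padicValNat_le (hc : DeterminedByResidueAndValuations c ϖ S)
    (hϖ : 0 < ϖ) (K : ℕ → ℕ) :
    (c '' {m | 1 ≤ m ∧ ∀ p ∈ S, padicValNat p m ≤ K p}).Finite := by
  refine finite_image_of_factor (g := fun m ↦ (m % ϖ, fun p : S ↦ padicValNat p m))
    (((Set.finite_Iio ϖ).prod (Set.Finite.pi fun p : S ↦ Set.finite_Iic (K p))).subset ?_) ?_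
  · rintro _ ⟨m, ⟨-, hm⟩, rfl⟩
    exact ⟨Nat.mod_lt m hϖ, fun p _ ↦ hm p p.2⟩
  · rintro m ⟨hm, -⟩ n ⟨hn, -⟩ hmn
    simp only [Prod.mk.injEq, funext_iff, Subtype.forall] at hmn
    exact hc m n hm hn hmn.1 hmn.2

/-- Shifting `n₀` by multiples of `m = ϖ (∏ S) n₀` does not change `c n₀`. A shift avoiding
divisibility by `p ^ (v_p(m) + k)` bounds `v_p(r + i)` when `v_p(n₀) < d`; otherwise
`v_p(r + i) < d` anyway, as `r + i` and `r + i₀ ≡ n₀` differ by at most `d`. -/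
lemma exists_eq_and_padicValNat_le (hc : DeterminedByResidueAndValuations c ϖ S)
    (hS : ∀ p ∈ S, p.Prime) (hϖ : 0 < ϖ) {d i₀ n₀ : ℕ} (hi₀ : i₀ ≤ d) (hn₀ : d < n₀) :
    ∃ r, 0 < r ∧ c (r + i₀) = c n₀ ∧ ∀ i ≤ d, i ≠ i₀ → ∀ p ∈ S,
      padicValNat p (r + i) ≤ padicValNat p (ϖ * ∏ q ∈ S, q) + d + S.card * (d + 1) := by
  set k := S.card * (d + 1)
  set m := ϖ * (∏ q ∈ S, q) * n₀
  have hP : ∏ q ∈ S, q ≠ 0 := Finset.prod_ne_zero_iff.2 fun q hq ↦ (hS q hq).ne_zero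
  have hm : m ≠ 0 := mul_ne_zero (mul_ne_zero hϖ.ne' hP) (by omega)
  obtain ⟨s, hs⟩ := exists_forall_not_pow_dvd_add_mul hS hm
    ((Finset.range (d + 1)).image (n₀ - i₀ + ·)) (k := k)
    ((Nat.mul_le_mul_left _ (Finset.card_image_le.trans (Finset.card_range _).le)).trans_lt
      Nat.lt_two_pow_self)
  set r := n₀ - i₀ + s * m
  have hri₀ : r + i₀ = n₀ + s * m := by omega
  refine ⟨r, by omega, by rw [hri₀, hc.add_eq hS (by omega) (dvd_mul_left m s)], ?_⟩
  intro i hi hii₀ p hp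
  have := Fact.mk (hS p hp)
  have hvi₀ : padicValNat p (r + i₀) = padicValNat p n₀ := by
    rw [hri₀, padicValNat_add_of_mul_dvd (by omega)]
    exact (mul_dvd_mul_right (Finset.dvd_prod_of_mem _ hp |>.mul_left ϖ) n₀).mul_left s
  have hvm : padicValNat p m = padicValNat p (ϖ * ∏ q ∈ S, q) + padicValNat p n₀ :=
    padicValNat.mul (mul_ne_zero hϖ.ne' hP) (by omega)
  have hvi : padicValNat p (r + i) < padicValNat p m + k := by
    by_contra hle
    refine hs p hp (n₀ - i₀ + i) (Finset.mem_image_of_mem _ (Finset.mem_range.2 (by omega))) ?_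
    rw [add_right_comm]
    exact (padicValNat_dvd_iff_le (by omega)).2 (not_lt.1 hle)
  have hmin := min_padicValNat_add_lt (p := p) r hi hi₀ hii₀
  rw [hvi₀] at hmin
  omega

lemma exists_period (hc : DeterminedByResidueAndValuations c ϖ S) (hS : ∀ p ∈ S, p.Prime)
    (hϖ : 0 < ϖ) {r : ℕ} (hr : 0 < r) (d : ℕ) :
    ∃ M, 0 < M ∧ ∀ i ≤ d, ∀ t, c (r + i + M * t) = c (r + i) := by
  have hP : ∏ q ∈ S, q ≠ 0 := Finset.prod_ne_zero_iff.2 fun q hq ↦ (hS q hq).ne_zero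
  refine ⟨ϖ * (∏ q ∈ S, q) * ∏ i ∈ Finset.range (d + 1), (r + i), Nat.pos_of_ne_zero
    (mul_ne_zero (mul_ne_zero hϖ.ne' hP) (Finset.prod_ne_zero_iff.2 fun i _ ↦ by omega)),
    fun i hi t ↦ hc.add_eq hS (by omega) ((mul_dvd_mul_left _ ?_).mul_right t)⟩
  exact Finset.dvd_prod_of_mem _ (Finset.mem_range.2 (by omega))

end DeterminedByResidueAndValuations

/-! ### The holonomic relation on a residue class -/

lemma eventually_sum_inv_mul_eq_zero {a b c : ℕ → ℂ} {d : ℕ} {q : Fin (d + 1) → ℂ[X]}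
    (hc0 : ∀ n, 1 ≤ n → c n ≠ 0) (habc : ∀ n, 1 ≤ n → a n = b n * c n)
    (hb : ∀ n : ℕ, 1 ≤ n → ∑ i : Fin (d + 1), (q i).eval (n : ℂ) * b (n + (i : ℕ)) = 0)
    {L : Finset ℂ} (hL : 0 ∉ L) {p : ℂ → ℂ[X]} (ha : a =ᶠ[atTop] expPoly L p) {W : ℕ}
    (hW : ∀ l ∈ L, ∀ l' ∈ L, ∀ m, 0 < m → l ^ m = l' ^ m → l ^ W = l' ^ W)
    {r M : ℕ} (hr : 0 < r) (hM : 0 < M) (hcM : ∀ i ≤ d, ∀ t, c (r + i + M * t) = c (r + i)) :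
    ∀ᶠ n in atTop, n ≡ r [MOD W] →
      ∑ i : Fin (d + 1), (q i).eval (n : ℂ) * (c (r + i))⁻¹ * a (n + i) = 0 := by
  have hf := eventuallyEq_expPoly_sum ha q (fun i ↦ (c (r + i))⁻¹) (fun i ↦ (i : ℕ))
  -- along the progression the factors `c (n + i)` are frozen, so the sum is the recurrence of `b`
  have hprog : ∀ t, ∑ i : Fin (d + 1), (q i).eval ((r + M * t : ℕ) : ℂ) * (c (r + i))⁻¹ *
      a (r + M * t + i) = 0 := fun t ↦ by
    rw [← hb (r + M * t) (by omega)]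
    refine Finset.sum_congr rfl fun i _ ↦ ?_
    have hci : c (r + M * t + i) = c (r + i) := by
      rw [add_right_comm]; exact hcM i (Nat.lt_succ_iff.1 i.2) t
    rw [habc _ (by omega), hci, mul_assoc, mul_comm (b _), ← mul_assoc _ _ (b _),
      inv_mul_cancel₀ (hc0 _ (by omega)), one_mul]
  have hexp : ∀ᶠ t in atTop, expPoly L _ (r + M * t) = 0 :=
    ((tendsto_atTop_mono (f := id) (g := (r + M * ·)) (fun t ↦ (Nat.le_mul_of_pos_left t hM).trans (Nat.le_add_left _ r))
      tendsto_id).eventually hf).mono fun t ht ↦ by rw [← ht]; exact hprog t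
  filter_upwards [hf] with n hn hmod
  rw [hn]
  exact expPoly_eq_zero_of_arithProg hL hW hM hexp hmod

lemma finite_setOf_eventually_sum_update_eq_zero {a : ℕ → ℂ} (ha : ∀ᶠ n in atTop, a n ≠ 0)
    {ι : Type*} [Fintype ι] [DecidableEq ι] (q : ι → ℂ[X]) (k : ι → ℕ) {i₀ : ι} (hq : q i₀ ≠ 0)
    {W : ℕ} (hW : 0 < W) {V : Set ℂ} (hV : V.Finite) :
    {z : ℂ | ∃ ρ < W, ∃ v : ι → ℂ, (∀ i, v i ∈ V) ∧ ∀ᶠ n in atTop, n ≡ ρ [MOD W] →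
      ∑ i, (q i).eval (n : ℂ) * Function.update v i₀ z i * a (n + k i) = 0}.Finite := by
  set R : ℕ × (ι → ℂ) → Set ℂ := fun ρv ↦ {z | ∀ᶠ n in atTop, n ≡ ρv.1 [MOD W] →
    ∑ i, (q i).eval (n : ℂ) * Function.update ρv.2 i₀ z i * a (n + k i) = 0}
  have hR : ∀ ρv, (R ρv).Subsingleton := by
    rintro ⟨ρ, v⟩ z₁ h₁ z₂ h₂
    obtain ⟨n, hn, hqn, han, e₁, e₂⟩ := ((Nat.frequently_modEq hW.ne' ρ).and_eventually
      ((eventually_eval_ne_zero hq).and (((tendsto_add_atTop_nat (k i₀)).eventually ha).and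
        (h₁.and h₂)))).exists
    have hdiff : ∑ i, (q i).eval (n : ℂ) * Function.update v i₀ z₁ i * a (n + k i) -
        ∑ i, (q i).eval (n : ℂ) * Function.update v i₀ z₂ i * a (n + k i) =
        (q i₀).eval (n : ℂ) * (z₁ - z₂) * a (n + k i₀) := by
      rw [← Finset.sum_sub_distrib, Finset.sum_eq_single i₀
        (fun i _ hi ↦ by simp [Function.update_of_ne hi]) (by simp)]
      simp only [Function.update_self]
      ring
    rw [e₁ hn, e₂ hn, sub_self, eq_comm] at hdiff
    simpa [hqn, han, sub_eq_zero] using hdiff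
  refine ((((Set.finite_Iio W).prod (Set.Finite.pi fun _ : ι ↦ hV)).biUnion
    fun ρv _ ↦ (hR ρv).finite).subset ?_)
  rintro z ⟨ρ, hρ, v, hv, hz⟩
  exact Set.mem_biUnion (x := (ρ, v)) ⟨hρ, fun i _ ↦ hv i⟩ hz

end HadamardQuotient

open HadamardQuotient

theorem hadamard_quotient_analogue_general (a b c : ℕ → ℂ)
    (ha0 : ∀ n : ℕ, 1 ≤ n → a n ≠ 0)
    (hc0 : ∀ n : ℕ, 1 ≤ n → c n ≠ 0)
    (habc : ∀ n : ℕ, 1 ≤ n → a n = b n * c n)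
    (hrec : SatisfiesLinearRecurrence a)
    (hhol : Holonomic b)
    (hdep : ∃ ϖ : ℕ, 1 ≤ ϖ ∧ ∃ S : Finset ℕ, (∀ p ∈ S, Nat.Prime p) ∧
      ∀ m n : ℕ, 1 ≤ m → 1 ≤ n → m % ϖ = n % ϖ →
        (∀ p ∈ S, padicValNat p m = padicValNat p n) → c m = c n) :
    {z : ℂ | ∃ n : ℕ, 1 ≤ n ∧ c n = z}.Finite := by
  obtain ⟨ϖ, hϖ, S, hS, hc : DeterminedByResidueAndValuations c ϖ S⟩ := hdep
  obtain ⟨d, q, ⟨i₀, hqi₀⟩, hb⟩ := hhol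
  obtain ⟨L, p, hL, hap⟩ := hrec.isExpPoly
  obtain ⟨W, hW, hWL⟩ := exists_pow_eq_pow_of_pow_eq_pow L
  set K : ℕ → ℕ := fun p ↦ padicValNat p (ϖ * ∏ q ∈ S, q) + d + S.card * (d + 1)
  set Γ := c '' {m | 1 ≤ m ∧ ∀ p ∈ S, padicValNat p m ≤ K p}
  have hΓ : Γ.Finite := hc.finite_image_setOf_padicValNat_le hϖ K
  have hZ := finite_setOf_eventually_sum_update_eq_zero ((eventually_ge_atTop 1).mono ha0) q
    Fin.val hqi₀ hW ((hΓ.image Inv.inv).insert 0)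
  refine (hΓ.union (hZ.image Inv.inv)).subset ?_
  rintro _ ⟨n₀, hn₀, rfl⟩
  rcases le_or_gt n₀ d with hle | hlt
  · exact Or.inl ⟨n₀, ⟨hn₀, fun p _ ↦ by
    have := Nat.padicValNat_le_self (p := p) n₀; simp only [K]; omega⟩, rfl⟩
  obtain ⟨r, hr, hri₀, hrK⟩ := hc.exists_eq_and_padicValNat_le hS hϖ i₀.is_le hlt
  obtain ⟨M, hM, hcM⟩ := hc.exists_period hS hϖ hr d
  have hvan := eventually_sum_inv_mul_eq_zero hc0 habc hb hL hap hWL hr hM hcM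
  refine Or.inr ⟨(c n₀)⁻¹, ⟨r % W, Nat.mod_lt r hW, Function.update (fun i ↦ (c (r + i))⁻¹) i₀ 0,
    fun i ↦ ?_, ?_⟩, inv_inv _⟩
  · by_cases hi : i = i₀
    · simp [hi]
    · simp only [Function.update_of_ne hi]
      exact Or.inr ⟨c (r + i), ⟨r + i, ⟨by omega, hrK i i.is_le fun h ↦ hi (Fin.ext h)⟩, rfl⟩, rfl⟩
  · rw [Function.update_idem, ← hri₀, Function.update_eq_self_iff.2 rfl]
    exact hvan.mono fun n hn hmod ↦ hn (hmod.trans (Nat.mod_modEq r W))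

/-- analogue of the Hadamard quotient theorem. -/
theorem hadamard_quotient_analogue (a b c : ℕ → ℂ)
    (ha0 : ∀ n : ℕ, 1 ≤ n → a n ≠ 0)
    (hb0 : ∀ n : ℕ, 1 ≤ n → b n ≠ 0)
    (hc0 : ∀ n : ℕ, 1 ≤ n → c n ≠ 0)
    (habc : ∀ n : ℕ, 1 ≤ n → a n = b n * c n)
    (hrec : SatisfiesLinearRecurrence a)
    (hhol : Holonomic b)
    (hdep : ∃ ϖ : ℕ, 1 ≤ ϖ ∧ ∃ S : Finset ℕ, (∀ p ∈ S, Nat.Prime p) ∧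
      ∀ m n : ℕ, 1 ≤ m → 1 ≤ n → m % ϖ = n % ϖ →
        (∀ p ∈ S, padicValNat p m = padicValNat p n) → c m = c n)
    (hring : ∃ T : Finset ℂ, ∀ n : ℕ, 1 ≤ n → c n ∈ Subring.closure (T : Set ℂ)) :
    {z : ℂ | ∃ n : ℕ, 1 ≤ n ∧ c n = z}.Finite :=
  hadamard_quotient_analogue_general a b c ha0 hc0 habc hrec hhol hdep
end

section
/- Let (X, f) be a FAD-system with exponential entropy Λ > 1, and let L_f ⊆ ℝ denote the set of accumulation points of the sequence (N·π_f(N)/Λ^N)_{N≥1}, i.e. the set of limits of convergent subsequences of this sequence. Then L_f is a compact subset of the open interval (0, +∞). -/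
open scoped BigOperators
open Filter

/-!
Write `aₙ = #Fix(fⁿ)` and `Λ` for the exponential entropy. Since
`|det(Aⁿ - 1)| = ∏ |ξᵢⁿ - 1|`, we get `aₙ ≤ C Λⁿ` for all `n`, and `aₙ ≥ δ Λⁿ` whenever `n` is
prime to every `p ∈ S` and `ξⁿ` stays away from `1` for the eigenvalues `ξ` of modulus one; a
pigeonhole argument finds such an `n` in every window `[N - J, N]`. From `ℓ P_ℓ ≤ a_ℓ` we get
`N π_f(N) = O(Λᴺ)`. Conversely `aₙ ≤ n Pₙ + n + ∑_{ℓ ≤ n/2} a_ℓ`, where the sum is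
`O(N √Λᴺ)`, so `N π_f(N) ≥ δ Λ^{N-J} / 2` for large `N`. Hence `N π_f(N) / Λᴺ` eventually lies in
an interval `[m, M]` with `m > 0`, which then contains the closed set of its accumulation points.
-/

open Polynomial Filter Topology Function Finset

theorem Finset.exists_pos_forall_le_of_pos {α : Type*} (s : Finset α) {g : α → ℝ}
    (hg : ∀ x ∈ s, 0 < g x) : ∃ ε > 0, ∀ x ∈ s, ε ≤ g x := by
  rcases s.eq_empty_or_nonempty with rfl | hs
  · exact ⟨1, one_pos, by simp⟩
  · exact ⟨s.inf' hs g, (lt_inf'_iff hs).2 hg, fun x hx => inf'_le g hx⟩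

theorem accPoints_eq_setOf_mapClusterPt (g : ℕ → ℝ) :
    accPoints g = {x | MapClusterPt x atTop g} := by
  ext x
  constructor
  · rintro ⟨φ, hφ, hlim⟩
    exact MapClusterPt.of_comp hφ.tendsto_atTop hlim.mapClusterPt
  · intro hx
    exact hx.tendsto_subseq

theorem isClosed_accPoints (g : ℕ → ℝ) : IsClosed (accPoints g) := by
  rw [accPoints_eq_setOf_mapClusterPt]
  exact isClosed_setOfPred_clusterPt

theorem accPoints_subset_of_eventually_mem {g : ℕ → ℝ} {s : Set ℝ} (hs : IsClosed s)
    (h : ∀ᶠ N in atTop, g N ∈ s) : accPoints g ⊆ s := by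
  rintro x ⟨φ, hφ, hlim⟩
  exact hs.mem_of_tendsto hlim (hφ.tendsto_atTop.eventually h)

namespace Matrix

variable {K n : Type*} [Field K] [IsAlgClosed K] [Fintype n] [DecidableEq n]

theorem det_sub_scalar_eq_prod_roots_charpoly (M : Matrix n n K) (z : K) :
    (M - scalar n z).det = (M.charpoly.roots.map fun ξ => ξ - z).prod := by
  have hcard : M.charpoly.roots.card = Fintype.card n := by
    rw [splits_iff_card_roots.mp (IsAlgClosed.splits _), charpoly_natDegree_eq_dim]
  rw [← neg_sub, det_neg, ← eval_charpoly,
    (IsAlgClosed.splits _).eval_eq_prod_roots_of_monic M.charpoly_monic, ← hcard,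
    ← Multiset.card_map (fun ξ => z - ξ), ← Multiset.prod_map_neg, Multiset.map_map]
  simp

theorem det_aeval_eq_prod_roots_charpoly (M : Matrix n n K) {p : K[X]} (hp : p.Monic) :
    (aeval M p).det = (M.charpoly.roots.map fun ξ => p.eval ξ).prod := by
  let detAeval : K[X] →* K := detMonoidHom.comp (aeval M).toMonoidHom
  have hfac := (IsAlgClosed.splits p).eq_prod_roots_of_monic hp
  calc (aeval M p).det = detAeval p := rfl
    _ = (p.roots.map fun ζ => (M - scalar n ζ).det).prod := by
      conv_lhs => rw [hfac]
      rw [map_multiset_prod, Multiset.map_map]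
      congr 1
      refine Multiset.map_congr rfl fun ζ _ => ?_
      change (aeval M (X - C ζ)).det = _
      rw [aeval_sub, aeval_X, aeval_C]
      rfl
    _ = (M.charpoly.roots.map fun ξ => p.eval ξ).prod := by
      simp_rw [det_sub_scalar_eq_prod_roots_charpoly]
      rw [Multiset.prod_map_prod_map]
      congr 1
      refine Multiset.map_congr rfl fun ξ _ => ?_
      rw [(IsAlgClosed.splits p).eval_eq_prod_roots_of_monic hp]

theorem det_pow_sub_one_eq_prod_roots_charpoly (M : Matrix n n K) {m : ℕ} (hm : m ≠ 0) :
    (M ^ m - 1).det = (M.charpoly.roots.map fun ξ => ξ ^ m - 1).prod := by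
  simpa using det_aeval_eq_prod_roots_charpoly M (monic_X_pow_sub_C (1 : K) hm)

end Matrix

noncomputable def complexEigenvalues {k : ℕ} (A : Matrix (Fin k) (Fin k) ℤ) : Multiset ℂ :=
  (A.map (Int.cast : ℤ → ℂ)).charpoly.roots

theorem abs_det_pow_sub_one_eq_prod {k : ℕ} (A : Matrix (Fin k) (Fin k) ℤ) {n : ℕ}
    (hn : n ≠ 0) :
    |((A ^ n - 1).det : ℝ)| = ((complexEigenvalues A).map fun ξ => ‖ξ ^ n - 1‖).prod := by
  have hcast : (((A ^ n - 1).det : ℤ) : ℂ) = ((A.map (Int.cast : ℤ → ℂ)) ^ n - 1).det := by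
    have := RingHom.map_det (Int.castRingHom ℂ) (A ^ n - 1)
    rw [map_sub, map_pow, map_one] at this
    exact this
  rw [← Complex.norm_intCast, hcast, Matrix.det_pow_sub_one_eq_prod_roots_charpoly _ hn]
  exact (map_multiset_prod (normHom : ℂ →*₀ ℝ) _).trans (by rw [Multiset.map_map]; rfl)

theorem expEntropy_eq_mul_prod {k : ℕ} (A : Matrix (Fin k) (Fin k) ℤ) (c : ℝ) :
    expEntropy A c = c * ((complexEigenvalues A).map fun ξ => max 1 ‖ξ‖).prod := rfl

theorem norm_pow_sub_one_le (ξ : ℂ) (n : ℕ) : ‖ξ ^ n - 1‖ ≤ 2 * max 1 ‖ξ‖ ^ n := by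
  have hle : ‖ξ‖ ^ n ≤ max 1 ‖ξ‖ ^ n := pow_le_pow_left₀ (norm_nonneg ξ) (le_max_right _ _) n
  have hone : 1 ≤ max 1 ‖ξ‖ ^ n := one_le_pow₀ (le_max_left _ _)
  calc ‖ξ ^ n - 1‖ ≤ ‖ξ‖ ^ n + 1 := by simpa using norm_sub_le (ξ ^ n) 1
    _ ≤ 2 * max 1 ‖ξ‖ ^ n := by linarith

theorem one_le_prod_max_one_norm (R : Multiset ℂ) : 1 ≤ (R.map fun ξ => max 1 ‖ξ‖).prod :=
  Multiset.one_le_prod fun _ h => by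
    obtain ⟨ξ, -, rfl⟩ := Multiset.mem_map.1 h
    exact le_max_left _ _

theorem prod_norm_pow_sub_one_nonneg (R : Multiset ℂ) (n : ℕ) :
    0 ≤ (R.map fun ξ => ‖ξ ^ n - 1‖).prod :=
  Multiset.prod_nonneg fun _ h => by
    obtain ⟨ξ, -, rfl⟩ := Multiset.mem_map.1 h
    exact norm_nonneg _

theorem prod_norm_pow_sub_one_le (R : Multiset ℂ) (n : ℕ) :
    (R.map fun ξ => ‖ξ ^ n - 1‖).prod ≤
      2 ^ Multiset.card R * (R.map fun ξ => max 1 ‖ξ‖).prod ^ n := by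
  calc (R.map fun ξ => ‖ξ ^ n - 1‖).prod
      ≤ (R.map fun ξ => 2 * max 1 ‖ξ‖ ^ n).prod :=
        Multiset.prod_map_le_prod_map₀ _ _ (fun _ _ => norm_nonneg _)
          fun ξ _ => norm_pow_sub_one_le ξ n
    _ = 2 ^ Multiset.card R * (R.map fun ξ => max 1 ‖ξ‖).prod ^ n := by
      rw [Multiset.prod_map_mul, Multiset.map_const', Multiset.prod_replicate,
        Multiset.prod_map_pow]

theorem exists_pos_mul_pow_le_norm_pow_sub_one (ξ : ℂ) {ε : ℝ} (hε : 0 < ε) :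
    ∃ γ > 0, ∀ n ≠ 0, (‖ξ‖ = 1 → ε ≤ ‖ξ ^ n - 1‖) → γ * max 1 ‖ξ‖ ^ n ≤ ‖ξ ^ n - 1‖ := by
  have hlow : ∀ n, 1 - ‖ξ‖ ^ n ≤ ‖ξ ^ n - 1‖ := fun n => by
    simpa [norm_sub_rev] using norm_sub_norm_le (1 : ℂ) (ξ ^ n)
  have hhigh : ∀ n, ‖ξ‖ ^ n - 1 ≤ ‖ξ ^ n - 1‖ := fun n => by
    simpa using norm_sub_norm_le (ξ ^ n) 1
  rcases lt_trichotomy ‖ξ‖ 1 with h | h | h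
  · refine ⟨1 - ‖ξ‖, by linarith, fun n hn _ => ?_⟩
    rw [max_eq_left h.le, one_pow, mul_one]
    linarith [hlow n, pow_le_of_le_one (norm_nonneg ξ) h.le hn]
  · exact ⟨ε, hε, fun n _ hgood => by simpa [h] using hgood h⟩
  · refine ⟨1 - ‖ξ‖⁻¹, by linarith [inv_lt_one_of_one_lt₀ h], fun n hn _ => ?_⟩
    rw [max_eq_right h.le]
    have hpow : 1 ≤ ‖ξ‖ ^ n * ‖ξ‖⁻¹ := by
      calc (1 : ℝ) = ‖ξ‖ * ‖ξ‖⁻¹ := (mul_inv_cancel₀ (by linarith)).symm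
        _ ≤ ‖ξ‖ ^ n * ‖ξ‖⁻¹ := by gcongr; exact le_self_pow₀ h.le hn
    linarith [hhigh n]

theorem exists_pos_mul_pow_le_prod_norm_pow_sub_one (R : Multiset ℂ) {ε : ℝ} (hε : 0 < ε) :
    ∃ δ > 0, ∀ n ≠ 0, (∀ ξ ∈ R, ‖ξ‖ = 1 → ε ≤ ‖ξ ^ n - 1‖) →
      δ * (R.map fun ξ => max 1 ‖ξ‖).prod ^ n ≤ (R.map fun ξ => ‖ξ ^ n - 1‖).prod := by
  induction R using Multiset.induction_on with
  | empty => exact ⟨1, one_pos, by simp⟩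
  | cons ξ R ih =>
    obtain ⟨δ, hδ, hR⟩ := ih
    obtain ⟨γ, hγ, hξ⟩ := exists_pos_mul_pow_le_norm_pow_sub_one ξ hε
    refine ⟨γ * δ, mul_pos hγ hδ, fun n hn hgood => ?_⟩
    simp only [Multiset.map_cons, Multiset.prod_cons, mul_pow]
    calc γ * δ * (max 1 ‖ξ‖ ^ n * (R.map fun ξ => max 1 ‖ξ‖).prod ^ n)
        = (γ * max 1 ‖ξ‖ ^ n) * (δ * (R.map fun ξ => max 1 ‖ξ‖).prod ^ n) := by ring
      _ ≤ ‖ξ ^ n - 1‖ * (R.map fun ξ => ‖ξ ^ n - 1‖).prod :=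
        mul_le_mul (hξ n hn (hgood ξ (Multiset.mem_cons_self ξ R)))
          (hR n hn fun η hη => hgood η (Multiset.mem_cons_of_mem hη))
          (mul_nonneg hδ.le (pow_nonneg (zero_le_one.trans (one_le_prod_max_one_norm R)) n))
          (norm_nonneg _)

theorem norm_pow_sub_one_le_add {ξ : ℂ} (hξ : ‖ξ‖ = 1) (a b : ℕ) :
    ‖ξ ^ b - 1‖ ≤ ‖ξ ^ (a + b) - 1‖ + ‖ξ ^ a - 1‖ := by
  calc ‖ξ ^ b - 1‖ = ‖ξ ^ a * (ξ ^ b - 1)‖ := by rw [norm_mul, norm_pow, hξ, one_pow, one_mul]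
    _ = ‖(ξ ^ (a + b) - 1) - (ξ ^ a - 1)‖ := by ring_nf
    _ ≤ ‖ξ ^ (a + b) - 1‖ + ‖ξ ^ a - 1‖ := norm_sub_le _ _

/-- Points of the unit circle that are not roots of unity cannot all come close to `1` at one of
the exponents `n₀, n₀ - Q, …, n₀ - #U * Q`: by pigeonhole two of these exponents would be bad for
the same `ξ`, and then `ξ ^ (i * Q)` would be close to `1` for some `1 ≤ i ≤ #U`. -/
theorem exists_window_norm_pow_sub_one_ge (U : Finset ℂ) (hU : ∀ ξ ∈ U, ‖ξ‖ = 1)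
    (hroot : ∀ ξ ∈ U, ∀ m, 1 ≤ m → ξ ^ m ≠ 1) {Q : ℕ} (hQ : Q ≠ 0) :
    ∃ ε > 0, ∀ n₀, #U * Q ≤ n₀ → ∃ j ≤ #U, ∀ ξ ∈ U, ε ≤ ‖ξ ^ (n₀ - j * Q) - 1‖ := by
  obtain ⟨η, hη, hηle⟩ := (U ×ˢ Icc 1 #U).exists_pos_forall_le_of_pos
    (g := fun q => ‖q.1 ^ (q.2 * Q) - 1‖) <| by
      rintro ⟨ξ, i⟩ hq
      rw [mem_product, mem_Icc] at hq
      exact norm_pos_iff.2 <| sub_ne_zero.2 <|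
        hroot ξ hq.1 _ (Nat.one_le_iff_ne_zero.2 (mul_ne_zero (by omega) hQ))
  refine ⟨η / 2, half_pos hη, fun n₀ hn₀ => ?_⟩
  by_contra! hbad
  choose! ξf hξU hξlt using hbad
  obtain ⟨j, hj, j', hj', hne, heq⟩ := exists_ne_map_eq_of_card_lt_of_maps_to
    (s := range (#U + 1)) (t := U) (by simp)
    fun j hj => hξU j (Nat.lt_succ_iff.1 (mem_range.1 hj))
  rw [mem_range, Nat.lt_succ_iff] at hj hj'
  wlog hlt : j < j' generalizing j j'
  · exact this j' hj' j hj hne.symm heq.symm (by omega)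
  have hsplit : n₀ - j' * Q + (j' - j) * Q = n₀ - j * Q := by
    have h1 : j' * Q ≤ #U * Q := Nat.mul_le_mul_right Q hj'
    have h2 : j * Q ≤ j' * Q := Nat.mul_le_mul_right Q hlt.le
    rw [Nat.sub_mul]
    omega
  have key := norm_pow_sub_one_le_add (hU _ (hξU j' hj')) (n₀ - j' * Q) ((j' - j) * Q)
  rw [hsplit, ← heq] at key
  have hfar := hηle (ξf j', j' - j) (mem_product.2 ⟨hξU j' hj', mem_Icc.2 ⟨by omega, by omega⟩⟩)
  rw [← heq] at hfar
  linarith [hξlt j hj, heq ▸ hξlt j' hj']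

theorem exists_window_one_add_mul_norm_pow_sub_one_ge (R : Multiset ℂ)
    (hR : ∀ ξ ∈ R, ∀ m, 1 ≤ m → ξ ^ m ≠ 1) {Q : ℕ} (hQ : Q ≠ 0) :
    ∃ ε > 0, ∃ J, ∀ N, J ≤ N → ∃ m, 1 + Q * m ≤ N ∧ N ≤ 1 + Q * m + J ∧
      ∀ ξ ∈ R, ‖ξ‖ = 1 → ε ≤ ‖ξ ^ (1 + Q * m) - 1‖ := by
  classical
  set U := R.toFinset.filter fun ξ => ‖ξ‖ = 1
  have hU : ∀ ξ ∈ U, ξ ∈ R ∧ ‖ξ‖ = 1 := fun ξ hξ => by simpa [U] using hξ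
  obtain ⟨ε, hε, hwin⟩ := exists_window_norm_pow_sub_one_ge U (fun ξ hξ => (hU ξ hξ).2)
    (fun ξ hξ => hR ξ (hU ξ hξ).1) hQ
  refine ⟨ε, hε, (#U + 1) * Q, fun N hN => ?_⟩
  set m₀ := (N - 1) / Q
  have hm₀ : Q * m₀ + (N - 1) % Q = N - 1 := Nat.div_add_mod _ _
  have hmod : (N - 1) % Q < Q := Nat.mod_lt _ (by omega)
  have hUQ : #U * Q + Q ≤ N := by rw [add_one_mul] at hN; exact hN
  obtain ⟨j, hj, hgood⟩ := hwin (1 + Q * m₀) (by omega)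
  have hjQ : j * Q ≤ #U * Q := Nat.mul_le_mul_right Q hj
  have hm : 1 + Q * m₀ - j * Q = 1 + Q * (m₀ - j) := by
    rw [Nat.mul_sub, mul_comm Q j]
    omega
  refine ⟨m₀ - j, by omega, ?_, fun ξ hξ h1 => ?_⟩
  · rw [add_one_mul]
    omega
  · rw [← hm]
    exact hgood ξ (by simp [U, hξ, h1])

theorem IsGcdSeqCoprime.isGcdSeq {α : Type*} {x : ℕ → α} {p : ℕ} (hx : IsGcdSeqCoprime x p) :
    IsGcdSeq x :=
  let ⟨d, hd, _, hxd⟩ := hx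
  ⟨d, hd, hxd⟩

theorem IsGcdSeq.exists_le {x : ℕ → ℝ} (hx : IsGcdSeq x) : ∃ B, ∀ n, 1 ≤ n → x n ≤ B := by
  obtain ⟨d, hd, hxd⟩ := hx
  obtain ⟨B, hB⟩ := (d.divisors.image x).exists_le
  exact ⟨B, fun n hn => hxd n hn ▸ hB _ (mem_image_of_mem x
    (Nat.mem_divisors.2 ⟨Nat.gcd_dvd_right n d, by omega⟩))⟩

theorem IsGcdSeq.exists_pos_le {x : ℕ → ℝ} (hx : IsGcdSeq x) (hpos : ∀ n, 1 ≤ n → 0 < x n) :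
    ∃ ε > 0, ∀ n, 1 ≤ n → ε ≤ x n := by
  obtain ⟨d, hd, hxd⟩ := hx
  obtain ⟨ε, hε, hle⟩ :=
    d.divisors.exists_pos_forall_le_of_pos fun m hm => hpos m (Nat.pos_of_mem_divisors hm)
  exact ⟨ε, hε, fun n hn => hxd n hn ▸ hle _ (Nat.mem_divisors.2 ⟨Nat.gcd_dvd_right n d, by omega⟩)⟩

theorem padicAbs_pos {p : ℕ} (hp : 0 < p) (n : ℕ) : 0 < padicAbs p n := by
  unfold padicAbs
  positivity

theorem padicAbs_le_one {p : ℕ} (hp : 0 < p) (n : ℕ) : padicAbs p n ≤ 1 :=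
  inv_le_one_of_one_le₀ (one_le_pow₀ (by exact_mod_cast hp))

theorem padicAbs_of_not_dvd {p n : ℕ} (h : ¬ p ∣ n) : padicAbs p n = 1 := by
  simp [padicAbs, padicValNat.eq_zero_of_not_dvd h]

section fadFactor

variable {S : Finset ℕ} {r : ℕ → ℝ} {s t : ℕ → ℕ → ℝ} {n : ℕ}

theorem fadFactor_pos (hS : ∀ p ∈ S, 0 < p) (hr : 0 < r n) : 0 < fadFactor S r s t n := by
  refine mul_pos hr (prod_pos fun p hp => ?_)
  have := padicAbs_pos (hS p hp) n
  have : (0 : ℝ) < p := by exact_mod_cast hS p hp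
  positivity

theorem fadFactor_le (hS : ∀ p ∈ S, 0 < p) (hr : 0 ≤ r n) (hs : ∀ p ∈ S, 0 ≤ s p n)
    (ht : ∀ p ∈ S, 0 ≤ t p n) : fadFactor S r s t n ≤ r n := by
  refine mul_le_of_le_one_right hr (prod_le_one (fun p hp => ?_) fun p hp => ?_)
  · have := padicAbs_pos (hS p hp) n
    have : (0 : ℝ) < p := by exact_mod_cast hS p hp
    positivity
  · have hv := padicAbs_pos (hS p hp) n
    have hp1 : (1 : ℝ) ≤ p := by exact_mod_cast hS p hp
    refine mul_le_one₀ (Real.rpow_le_one hv.le (padicAbs_le_one (hS p hp) n) (hs p hp))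
      (by positivity) (Real.rpow_le_one_of_one_le_of_nonpos hp1 ?_)
    have := ht p hp
    have : 0 ≤ t p n * (padicAbs p n)⁻¹ := by positivity
    linarith

theorem fadFactor_of_coprime (h : ∀ p ∈ S, ¬ p ∣ n) :
    fadFactor S r s t n = r n * ∏ p ∈ S, (p : ℝ) ^ (-t p n) := by
  unfold fadFactor
  congr 1
  refine prod_congr rfl fun p hp => ?_
  simp [padicAbs_of_not_dvd (h p hp)]

end fadFactor

namespace IsFADWith

variable {a : ℕ → ℤ} {k : ℕ} {A : Matrix (Fin k) (Fin k) ℤ} {S : Finset ℕ} {c : ℝ}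
  {r : ℕ → ℝ} {s t : ℕ → ℕ → ℝ}

theorem cast_eq_prod_norm_pow_sub_one_mul (h : IsFADWith a A S c r s t) {n : ℕ} (hn : 1 ≤ n) :
    (a n : ℝ) =
      ((complexEigenvalues A).map fun ξ => ‖ξ ^ n - 1‖).prod * c ^ n * fadFactor S r s t n := by
  have ⟨_, _, _, _, _, _, _, ha⟩ := h
  rw [ha n hn, abs_det_pow_sub_one_eq_prod A (by omega)]

theorem exists_le_mul_pow (h : IsFADWith a A S c r s t) :
    ∃ C > 0, ∀ n, 1 ≤ n → (a n : ℝ) ≤ C * expEntropy A c ^ n := by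
  have ⟨_, hS, hc, hr, hrpos, hs, ht, _⟩ := h
  obtain ⟨B, hB⟩ := hr.exists_le
  have hBpos : 0 < B := (hrpos 1 le_rfl).trans_le (hB 1 le_rfl)
  refine ⟨2 ^ Multiset.card (complexEigenvalues A) * B, by positivity, fun n hn => ?_⟩
  have hfad : fadFactor S r s t n ≤ B := (fadFactor_le (fun p hp => (hS p hp).pos)
    (hrpos n hn).le (fun p hp => (hs p hp).2 n hn) (fun p hp => (ht p hp).2 n hn)).trans (hB n hn)
  rw [h.cast_eq_prod_norm_pow_sub_one_mul hn, expEntropy_eq_mul_prod, mul_pow]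
  have hP := one_le_prod_max_one_norm (complexEigenvalues A)
  calc _ ≤ (2 ^ Multiset.card (complexEigenvalues A) *
        ((complexEigenvalues A).map fun ξ => max 1 ‖ξ‖).prod ^ n) * c ^ n * B :=
        mul_le_mul (mul_le_mul_of_nonneg_right (prod_norm_pow_sub_one_le _ n) (by positivity))
          hfad (fadFactor_pos (fun p hp => (hS p hp).pos) (hrpos n hn)).le
          (mul_nonneg (mul_nonneg (by positivity) (pow_nonneg (zero_le_one.trans hP) n))
            (by positivity))
    _ = _ := by ring

theorem exists_mul_pow_le_of_coprime (h : IsFADWith a A S c r s t) {ε : ℝ} (hε : 0 < ε) :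
    ∃ δ > 0, ∀ n, 1 ≤ n → (∀ p ∈ S, ¬ p ∣ n) →
      (∀ ξ ∈ complexEigenvalues A, ‖ξ‖ = 1 → ε ≤ ‖ξ ^ n - 1‖) →
      δ * expEntropy A c ^ n ≤ a n := by
  have ⟨_, hS, hc, hr, hrpos, _, ht, _⟩ := h
  obtain ⟨ρ, hρ, hρr⟩ := hr.exists_pos_le hrpos
  choose! T hT using fun p hp => (ht p hp).1.isGcdSeq.exists_le
  obtain ⟨δ, hδ, hprod⟩ := exists_pos_mul_pow_le_prod_norm_pow_sub_one (complexEigenvalues A) hε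
  have hp1 : ∀ p ∈ S, (1 : ℝ) ≤ p := fun p hp => by exact_mod_cast (hS p hp).one_lt.le
  have hpow_pos : ∀ p ∈ S, ∀ x : ℝ, 0 < (p : ℝ) ^ x := fun p hp x =>
    Real.rpow_pos_of_pos (zero_lt_one.trans_le (hp1 p hp)) x
  refine ⟨δ * (ρ * ∏ p ∈ S, (p : ℝ) ^ (-T p)),
    mul_pos hδ (mul_pos hρ (prod_pos fun p hp => hpow_pos p hp _)), fun n hn hcop hgood => ?_⟩
  have hfad : ρ * ∏ p ∈ S, (p : ℝ) ^ (-T p) ≤ fadFactor S r s t n := by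
    rw [fadFactor_of_coprime hcop]
    refine mul_le_mul (hρr n hn) (prod_le_prod (fun p hp => (hpow_pos p hp _).le) fun p hp => ?_)
      (prod_nonneg fun p hp => (hpow_pos p hp _).le) (hrpos n hn).le
    exact Real.rpow_le_rpow_of_exponent_le (hp1 p hp) (by linarith [hT p hp n hn])
  rw [h.cast_eq_prod_norm_pow_sub_one_mul hn, expEntropy_eq_mul_prod, mul_pow]
  calc _ = (δ * ((complexEigenvalues A).map fun ξ => max 1 ‖ξ‖).prod ^ n) * c ^ n *
        (ρ * ∏ p ∈ S, (p : ℝ) ^ (-T p)) := by ring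
    _ ≤ _ :=
        mul_le_mul (mul_le_mul_of_nonneg_right (hprod n (by omega) hgood) (by positivity)) hfad
          (mul_pos hρ (prod_pos fun p hp => hpow_pos p hp _)).le
          (mul_nonneg (prod_norm_pow_sub_one_nonneg _ n) (by positivity))

theorem exists_window_mul_pow_le (h : IsFADWith a A S c r s t) :
    ∃ δ > 0, ∃ J, ∀ N, J ≤ N → ∃ n, 1 ≤ n ∧ n ≤ N ∧ N ≤ n + J ∧ δ * expEntropy A c ^ n ≤ a n := by
  have hS := h.2.1
  have hQ : ∏ p ∈ S, p ≠ 0 := prod_ne_zero_iff.2 fun p hp => (hS p hp).ne_zero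
  obtain ⟨ε, hε, J, hwin⟩ := exists_window_one_add_mul_norm_pow_sub_one_ge _
    (fun ξ hξ => h.1 ξ (isRoot_of_mem_roots hξ)) hQ
  obtain ⟨δ, hδ, hlow⟩ := h.exists_mul_pow_le_of_coprime hε
  refine ⟨δ, hδ, J, fun N hN => ?_⟩
  obtain ⟨m, hmN, hNm, hgood⟩ := hwin N hN
  refine ⟨1 + (∏ p ∈ S, p) * m, by omega, hmN, hNm, hlow _ (by omega) (fun p hp hpn => ?_) hgood⟩
  have hp1 := (Nat.dvd_add_left (dvd_mul_of_dvd_left (dvd_prod_of_mem _ hp) m)).1 hpn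
  exact (hS p hp).one_lt.ne' (Nat.dvd_one.1 hp1)

end IsFADWith

theorem Nat.le_div_two_of_mem_properDivisors {n l : ℕ} (h : l ∈ n.properDivisors) :
    l ≤ n / 2 := by
  obtain ⟨⟨q, rfl⟩, hlt⟩ := Nat.mem_properDivisors.1 h
  rw [Nat.le_div_iff_mul_le two_pos]
  rcases q with _ | _ | q
  · simp at hlt
  · simp at hlt
  · nlinarith

section OrbitCounting

variable {X : Type*} (f : X → X)

theorem card_minimalPeriod_eq_le_card_fixedPoints {l : ℕ} (hfin : (fixedPoints f^[l]).Finite) :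
    Nat.card {x // minimalPeriod f x = l} ≤ Nat.card (fixedPoints f^[l]) :=
  Nat.card_mono (s := {x | minimalPeriod f x = l}) hfin
    fun x hx => hx ▸ isPeriodicPt_minimalPeriod f x

theorem card_fixedPoints_iterate_eq_sum {n : ℕ} (hn : n ≠ 0) (hfin : (fixedPoints f^[n]).Finite) :
    Nat.card (fixedPoints f^[n]) = ∑ l ∈ n.divisors, Nat.card {x // minimalPeriod f x = l} := by
  classical
  have hmaps : ∀ x ∈ hfin.toFinset, minimalPeriod f x ∈ n.divisors := fun x hx =>
    Nat.mem_divisors.2 ⟨IsPeriodicPt.minimalPeriod_dvd (hfin.mem_toFinset.1 hx), hn⟩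
  rw [Nat.card_coe_set_eq, Set.ncard_eq_toFinset_card _ hfin, card_eq_sum_card_fiberwise hmaps]
  refine sum_congr rfl fun l hl => ?_
  have hfiber : ((hfin.toFinset.filter fun x => minimalPeriod f x = l : Finset X) : Set X) =
      {x | minimalPeriod f x = l} := by
    ext x
    simp only [coe_filter, Set.Finite.mem_toFinset, Set.mem_ofPred_eq, and_iff_right_iff_imp]
    intro hx
    exact (hx ▸ isPeriodicPt_minimalPeriod f x).trans_dvd (Nat.dvd_of_mem_divisors hl)
  rw [← Set.ncard_coe_finset, hfiber, ← Nat.card_coe_set_eq]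
  rfl

theorem mul_orbitCount_le (l : ℕ) : l * orbitCount f l ≤ Nat.card {x // minimalPeriod f x = l} := by
  rw [orbitCount, mul_comm]
  exact Nat.div_mul_le_self _ _

theorem card_minimalPeriod_eq_lt {l : ℕ} (hl : l ≠ 0) :
    Nat.card {x // minimalPeriod f x = l} < l * orbitCount f l + l := by
  rw [orbitCount, ← Nat.mul_add_one]
  exact Nat.lt_mul_div_succ _ (Nat.pos_of_ne_zero hl)

theorem card_fixedPoints_iterate_le (hfin : ∀ n, 1 ≤ n → (fixedPoints f^[n]).Finite) {n : ℕ}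
    (hn : 1 ≤ n) :
    Nat.card (fixedPoints f^[n]) ≤
      n * orbitCount f n + n + ∑ l ∈ Icc 1 (n / 2), Nat.card (fixedPoints f^[l]) := by
  rw [card_fixedPoints_iterate_eq_sum f (by omega) (hfin n hn),
    ← Nat.cons_self_properDivisors (by omega), sum_cons]
  have hproper : ∑ l ∈ n.properDivisors, Nat.card {x // minimalPeriod f x = l} ≤
      ∑ l ∈ Icc 1 (n / 2), Nat.card (fixedPoints f^[l]) :=
    calc _ ≤ ∑ l ∈ n.properDivisors, Nat.card (fixedPoints f^[l]) :=
          sum_le_sum fun l hl => card_minimalPeriod_eq_le_card_fixedPoints f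
            (hfin l (Nat.pos_of_mem_properDivisors hl))
      _ ≤ _ := sum_le_sum_of_subset fun l hl => mem_Icc.2
          ⟨Nat.pos_of_mem_properDivisors hl, Nat.le_div_two_of_mem_properDivisors hl⟩
  have := card_minimalPeriod_eq_lt f (l := n) (by omega)
  omega

theorem card_fixedPoints_iterate_le_mul_orbitCountBelow
    (hfin : ∀ n, 1 ≤ n → (fixedPoints f^[n]).Finite) {n N : ℕ} (hn : 1 ≤ n) (hnN : n ≤ N) :
    Nat.card (fixedPoints f^[n]) ≤
      N * orbitCountBelow f N + N + ∑ l ∈ Icc 1 (N / 2), Nat.card (fixedPoints f^[l]) := by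
  have horbit : n * orbitCount f n ≤ N * orbitCountBelow f N :=
    Nat.mul_le_mul hnN (single_le_sum (fun _ _ => Nat.zero_le _) (mem_Icc.2 ⟨hn, hnN⟩))
  have hsum : ∑ l ∈ Icc 1 (n / 2), Nat.card (fixedPoints f^[l]) ≤
      ∑ l ∈ Icc 1 (N / 2), Nat.card (fixedPoints f^[l]) :=
    sum_le_sum_of_subset (Icc_subset_Icc_right (Nat.div_le_div_right hnN))
  have := card_fixedPoints_iterate_le f hfin hn
  omega

end OrbitCounting

theorem exists_sum_Icc_div_mul_pow_le {Λ : ℝ} (hΛ : 1 < Λ) :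
    ∃ K, ∀ N : ℕ, ∑ l ∈ Icc 1 N, ((N : ℝ) / l) * Λ ^ l ≤ K * Λ ^ N := by
  set x := Λ⁻¹
  have hx0 : 0 ≤ x := inv_nonneg.2 (by linarith)
  have hx1 : x < 1 := inv_lt_one_of_one_lt₀ hΛ
  set g : ℕ → ℝ := fun i => (i + 1) * x ^ i
  have hg : Summable g := by
    have h1 := summable_pow_mul_geometric_of_norm_lt_one 1 (r := x)
      (by rwa [Real.norm_of_nonneg hx0])
    simpa [g, add_mul] using h1.add (summable_geometric_of_lt_one hx0 hx1)
  refine ⟨∑' i, g i, fun N => ?_⟩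
  have hterm : ∀ l ∈ Icc 1 N, ((N : ℝ) / l) * Λ ^ l ≤ g (N - l) * Λ ^ N := by
    intro l hl
    rw [mem_Icc] at hl
    have hl1 : (1 : ℝ) ≤ l := by exact_mod_cast hl.1
    have hlN : (l : ℝ) ≤ N := by exact_mod_cast hl.2
    -- `N ≤ l (N - l + 1)` is `(l - 1) (N - l) ≥ 0`; it reduces the sum to one of `∑ (i + 1) xⁱ`.
    have hdiv : (N : ℝ) / l ≤ ((N - l : ℕ) : ℝ) + 1 := by
      rw [Nat.cast_sub hl.2, div_le_iff₀ (by linarith)]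
      nlinarith
    have hpow : Λ ^ l = x ^ (N - l) * Λ ^ N := by
      rw [← pow_sub_mul_pow Λ hl.2, ← mul_assoc, ← mul_pow, inv_mul_cancel₀ (by linarith),
        one_pow, one_mul]
    calc ((N : ℝ) / l) * Λ ^ l ≤ (((N - l : ℕ) : ℝ) + 1) * Λ ^ l :=
          mul_le_mul_of_nonneg_right hdiv (by positivity)
      _ = g (N - l) * Λ ^ N := by rw [hpow]; ring
  calc ∑ l ∈ Icc 1 N, ((N : ℝ) / l) * Λ ^ l ≤ ∑ l ∈ Icc 1 N, g (N - l) * Λ ^ N := sum_le_sum hterm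
    _ = (∑ i ∈ (Icc 1 N).image (N - ·), g i) * Λ ^ N := by
        rw [sum_mul, sum_image fun a ha b hb hab => by simp at ha hb hab; omega]
    _ ≤ (∑' i, g i) * Λ ^ N := by
        gcongr
        exact hg.sum_le_tsum _ fun i _ => by positivity

theorem sum_Icc_half_le {a : ℕ → ℝ} {C Λ : ℝ} (hC : 0 ≤ C) (hΛ : 1 ≤ Λ)
    (ha : ∀ l, 1 ≤ l → a l ≤ C * Λ ^ l) (N : ℕ) :
    ∑ l ∈ Icc 1 (N / 2), a l ≤ C * N * √Λ ^ N := by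
  have hhalf : Λ ^ (N / 2) ≤ √Λ ^ N :=
    calc Λ ^ (N / 2) = √Λ ^ (2 * (N / 2)) := by rw [pow_mul, Real.sq_sqrt (by linarith)]
      _ ≤ √Λ ^ N := pow_le_pow_right₀ (Real.one_le_sqrt.2 hΛ) (Nat.mul_div_le N 2)
  calc ∑ l ∈ Icc 1 (N / 2), a l ≤ ∑ _l ∈ Icc 1 (N / 2), C * √Λ ^ N :=
        sum_le_sum fun l hl => (ha l (mem_Icc.1 hl).1).trans <| mul_le_mul_of_nonneg_left
          ((pow_le_pow_right₀ hΛ (mem_Icc.1 hl).2).trans hhalf) hC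
    _ = (N / 2 : ℕ) * (C * √Λ ^ N) := by simp
    _ ≤ N * (C * √Λ ^ N) := by gcongr; exact_mod_cast Nat.div_le_self N 2
    _ = C * N * √Λ ^ N := by ring

theorem tendsto_natCast_add_mul_sqrt_pow_div_pow {Λ : ℝ} (hΛ : 1 < Λ) (C : ℝ) :
    Tendsto (fun N : ℕ => (N + C * N * √Λ ^ N) / Λ ^ N) atTop (𝓝 0) := by
  set s := √Λ
  have hs : 1 < s := Real.lt_sqrt_of_sq_lt (by linarith)
  have hΛs : Λ = s * s := (Real.mul_self_sqrt (by linarith)).symm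
  have heq : ∀ N : ℕ, (N + C * N * s ^ N) / Λ ^ N = N * Λ⁻¹ ^ N + C * (N * s⁻¹ ^ N) := by
    intro N
    have : s ^ N ≠ 0 := pow_ne_zero _ (by linarith)
    rw [inv_pow, inv_pow, hΛs, mul_pow]
    field_simp
  simp_rw [heq]
  have h1 := tendsto_self_mul_const_pow_of_lt_one (inv_nonneg.2 (by linarith : (0 : ℝ) ≤ Λ))
    (inv_lt_one_of_one_lt₀ hΛ)
  have h2 := tendsto_self_mul_const_pow_of_lt_one (inv_nonneg.2 (by linarith : (0 : ℝ) ≤ s))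
    (inv_lt_one_of_one_lt₀ hs)
  simpa using h1.add (h2.const_mul C)

section OrbitGrowth

variable {X : Type*} (f : X → X) {C Λ : ℝ}

theorem exists_mul_orbitCountBelow_le (hfin : ∀ n, 1 ≤ n → (fixedPoints f^[n]).Finite)
    (hC : 0 ≤ C) (hΛ : 1 < Λ)
    (hup : ∀ n, 1 ≤ n → (Nat.card (fixedPoints f^[n]) : ℝ) ≤ C * Λ ^ n) :
    ∃ M, ∀ N : ℕ, (N : ℝ) * orbitCountBelow f N ≤ M * Λ ^ N := by
  obtain ⟨K, hK⟩ := exists_sum_Icc_div_mul_pow_le hΛ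
  refine ⟨C * K, fun N => ?_⟩
  have hterm : ∀ l ∈ Icc 1 N, (N : ℝ) * orbitCount f l ≤ C * ((N / l) * Λ ^ l) := by
    intro l hl
    have hl1 := (mem_Icc.1 hl).1
    have hnat := (mul_orbitCount_le f l).trans
      (card_minimalPeriod_eq_le_card_fixedPoints f (hfin l hl1))
    have hcount : ((l * orbitCount f l : ℕ) : ℝ) ≤ C * Λ ^ l :=
      le_trans (by exact_mod_cast hnat) (hup l hl1)
    have hl0 : (l : ℝ) ≠ 0 := by positivity
    calc (N : ℝ) * orbitCount f l = (N / l) * ((l * orbitCount f l : ℕ) : ℝ) := by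
          push_cast
          field_simp
      _ ≤ (N / l) * (C * Λ ^ l) := by gcongr
      _ = C * ((N / l) * Λ ^ l) := by ring
  calc (N : ℝ) * orbitCountBelow f N = ∑ l ∈ Icc 1 N, (N : ℝ) * orbitCount f l := by
        rw [orbitCountBelow, Nat.cast_sum, mul_sum]
    _ ≤ ∑ l ∈ Icc 1 N, C * ((N / l) * Λ ^ l) := sum_le_sum hterm
    _ ≤ C * (K * Λ ^ N) := by
        rw [← mul_sum]
        exact mul_le_mul_of_nonneg_left (hK N) hC
    _ = C * K * Λ ^ N := by ring

theorem eventually_mul_pow_le_mul_orbitCountBelow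
    (hfin : ∀ n, 1 ≤ n → (fixedPoints f^[n]).Finite) (hC : 0 ≤ C) (hΛ : 1 < Λ)
    (hup : ∀ n, 1 ≤ n → (Nat.card (fixedPoints f^[n]) : ℝ) ≤ C * Λ ^ n) {δ : ℝ} (hδ : 0 < δ)
    {J : ℕ} (hlow : ∀ N, J ≤ N → ∃ n, 1 ≤ n ∧ n ≤ N ∧ N ≤ n + J ∧
      δ * Λ ^ n ≤ Nat.card (fixedPoints f^[n])) :
    ∃ m > 0, ∀ᶠ N in atTop, m * Λ ^ N ≤ N * orbitCountBelow f N := by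
  have hΛ0 : 0 < Λ := by linarith
  set m₀ := δ / Λ ^ J
  have hm₀ : 0 < m₀ := div_pos hδ (pow_pos hΛ0 J)
  refine ⟨m₀ / 2, half_pos hm₀, ?_⟩
  filter_upwards [(tendsto_natCast_add_mul_sqrt_pow_div_pow hΛ C).eventually
    (gt_mem_nhds (half_pos hm₀)), eventually_ge_atTop J] with N herr hJN
  obtain ⟨n, hn, hnN, hNn, hδn⟩ := hlow N hJN
  have hcount : (Nat.card (fixedPoints f^[n]) : ℝ) ≤
      N * orbitCountBelow f N + N + C * N * √Λ ^ N := by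
    have hnat := card_fixedPoints_iterate_le_mul_orbitCountBelow f hfin hn hnN
    have hreal : (Nat.card (fixedPoints f^[n]) : ℝ) ≤ N * orbitCountBelow f N + N +
        ∑ l ∈ Icc 1 (N / 2), (Nat.card (fixedPoints f^[l]) : ℝ) := by exact_mod_cast hnat
    linarith [sum_Icc_half_le hC hΛ.le hup N]
  have hshift : m₀ * Λ ^ N ≤ δ * Λ ^ n := by
    rw [div_mul_eq_mul_div, div_le_iff₀ (pow_pos hΛ0 J), mul_assoc, ← pow_add]
    exact mul_le_mul_of_nonneg_left (pow_le_pow_right₀ hΛ.le hNn) hδ.le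
  rw [div_lt_iff₀ (pow_pos hΛ0 N)] at herr
  linarith

end OrbitGrowth

/-- the set of accumulation points of `N·π_f(N)/Λ^N` is a compact
subset of `(0, +∞)`. -/
theorem fad_accumulation_compact {X : Type*} (f : X → X)
    (hfin : ∀ n : ℕ, 1 ≤ n → (Function.fixedPoints (f^[n])).Finite)
    {k : ℕ} (A : Matrix (Fin k) (Fin k) ℤ) (S : Finset ℕ) (c : ℝ)
    (r : ℕ → ℝ) (s t : ℕ → ℕ → ℝ)
    (hFAD : IsFADWith (fixCount f) A S c r s t)
    (hΛ : 1 < expEntropy A c) :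
    IsCompact (accPoints fun N : ℕ =>
      (N : ℝ) * (orbitCountBelow f N : ℝ) / expEntropy A c ^ N) ∧
    (accPoints fun N : ℕ =>
      (N : ℝ) * (orbitCountBelow f N : ℝ) / expEntropy A c ^ N) ⊆ Set.Ioi (0 : ℝ) := by
  obtain ⟨C, hC, hup⟩ := hFAD.exists_le_mul_pow
  obtain ⟨δ, hδ, J, hlow⟩ := hFAD.exists_window_mul_pow_le
  simp only [fixCount, Int.cast_natCast] at hup hlow
  obtain ⟨M, hM⟩ := exists_mul_orbitCountBelow_le f hfin hC.le hΛ hup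
  obtain ⟨m, hm, hmN⟩ := eventually_mul_pow_le_mul_orbitCountBelow f hfin hC.le hΛ hup hδ hlow
  have hΛN : ∀ N : ℕ, 0 < expEntropy A c ^ N := fun N => pow_pos (by linarith) N
  have hsub : accPoints (fun N : ℕ => (N : ℝ) * (orbitCountBelow f N : ℝ) / expEntropy A c ^ N)
      ⊆ Set.Icc m M :=
    accPoints_subset_of_eventually_mem isClosed_Icc <| hmN.mono fun N hN =>
      ⟨(le_div_iff₀ (hΛN N)).2 hN, (div_le_iff₀ (hΛN N)).2 (hM N)⟩
  exact ⟨isCompact_Icc.of_isClosed_subset (isClosed_accPoints _) hsub,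
    hsub.trans fun x hx => hm.trans_le hx.1⟩
end

section
/- Let ξ_1, …, ξ_s be complex numbers, none of which is a root of unity, such that the multiset {ξ_1, …, ξ_s} is stable under complex conjugation, and set a_n := ∏_{i=1}^s (ξ_i^n − 1) for n ≥ 1. Then every a_n is a nonzero real number whose sign equals (−1)^{ε₁ + ε₂·n}, where ε₁ is the number of indices i with ξ_i real and −1 < ξ_i < 1, and ε₂ is the number of indices i with ξ_i real and ξ_i < −1. Furthermore, the zeta function ζ_{(|a_n|)}(z) = exp(∑_{n≥1} |a_n| z^n / n) is the power series expansion of a rational function. -/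
open scoped BigOperators
open Filter

/-!
Non-real `ξᵢ` come in conjugate pairs, whose factors multiply to `|ξᵢⁿ - 1|² > 0`. A real `ξᵢ`
contributes a factor of sign `-1` if `|ξᵢ| < 1`, `(-1)ⁿ` if `ξᵢ < -1`, and `+1` if `ξᵢ > 1`.
Hence `|aₙ| = (-1)^(ε₁ + ε₂ n) aₙ`, and expanding the product writes `|aₙ|` as a finite sum
`∑ ± λⁿ`. The zeta function turns sums into products, because `ζ_b` is the unique solution of
`ζ' = (∑ bₙ₊₁ zⁿ) ζ` with `ζ(0) = 1`, and `ζ_{±λⁿ} = (1 - λz)^{∓1}`.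
-/

open Finset PowerSeries ComplexConjugate

theorem PowerSeries.eq_of_derivative_eq_mul {K : Type*} [Field K] [CharZero K] {A P Q : K⟦X⟧}
    (hP : derivative K P = A * P) (hQ : derivative K Q = A * Q)
    (h0 : constantCoeff P = constantCoeff Q) : P = Q := by
  ext n
  induction n using Nat.strong_induction_on with
  | _ n ih =>
    cases n with
    | zero => simpa using h0
    | succ n =>
      have hn : ((n : K) + 1) ≠ 0 := Nat.cast_add_one_ne_zero n
      refine mul_right_cancel₀ hn ?_
      rw [← coeff_derivative, ← coeff_derivative, hP, hQ, coeff_mul, coeff_mul]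
      refine sum_congr rfl fun p hp => ?_
      rw [ih p.2 (by have := mem_antidiagonal.mp hp; omega)]

theorem PowerSeries.mk_pow_mul_one_sub_C_mul_X {K : Type*} [CommRing K] (l : K) :
    mk (l ^ ·) * (1 - C l * X) = 1 := by
  simpa [rescale_mk, rescale_X] using congrArg (rescale l) (mk_one_mul_one_sub_eq_one (S := K))

theorem succ_mul_zetaCoeff_succ (a : ℕ → ℂ) (n : ℕ) :
    ((n : ℂ) + 1) * zetaCoeff a (n + 1) =
      ∑ k ∈ range (n + 1), a (k + 1) * zetaCoeff a (n - k) := by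
  rw [zetaCoeff, ← mul_assoc, mul_inv_cancel₀ (Nat.cast_add_one_ne_zero n), one_mul]

theorem derivative_zetaPS (a : ℕ → ℂ) :
    derivative ℂ (zetaPS a) = mk (fun n => a (n + 1)) * zetaPS a := by
  ext n
  rw [coeff_derivative, coeff_mul, Nat.sum_antidiagonal_eq_sum_range_succ_mk]
  simp only [zetaPS, coeff_mk]
  rw [mul_comm, succ_mul_zetaCoeff_succ]

theorem constantCoeff_zetaPS (a : ℕ → ℂ) : constantCoeff (zetaPS a) = 1 := by
  simp [zetaPS, zetaCoeff]

theorem zetaPS_eq_of_derivative_eq_mul {a : ℕ → ℂ} {F : ℂ⟦X⟧}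
    (hF : derivative ℂ F = mk (fun n => a (n + 1)) * F) (h0 : constantCoeff F = 1) :
    zetaPS a = F :=
  eq_of_derivative_eq_mul (derivative_zetaPS a) hF (by rw [constantCoeff_zetaPS, h0])

theorem zetaPS_congr {a b : ℕ → ℂ} (h : ∀ n, 1 ≤ n → a n = b n) : zetaPS a = zetaPS b := by
  refine zetaPS_eq_of_derivative_eq_mul ?_ (constantCoeff_zetaPS b)
  rw [derivative_zetaPS]
  congr 2
  ext n
  exact (h (n + 1) n.succ_pos).symm

theorem zetaPS_zero : zetaPS 0 = 1 :=
  zetaPS_eq_of_derivative_eq_mul (by ext; simp) (by simp)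

theorem zetaPS_add (a b : ℕ → ℂ) : zetaPS (a + b) = zetaPS a * zetaPS b := by
  refine zetaPS_eq_of_derivative_eq_mul ?_ (by simp [constantCoeff_zetaPS])
  have hmk : mk (fun n => (a + b) (n + 1)) =
      mk (fun n => a (n + 1)) + mk (fun n => b (n + 1)) := by
    ext n; simp
  rw [Derivation.leibniz, derivative_zetaPS, derivative_zetaPS, smul_eq_mul, smul_eq_mul, hmk]
  ring

theorem zetaPS_sum {ι : Type*} (S : Finset ι) (f : ι → ℕ → ℂ) :
    zetaPS (∑ t ∈ S, f t) = ∏ t ∈ S, zetaPS (f t) := by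
  induction S using Finset.cons_induction with
  | empty => simpa using zetaPS_zero
  | cons t S ht ih => rw [sum_cons, prod_cons, zetaPS_add, ih]

theorem zetaPS_natCast_mul (m : ℕ) (a : ℕ → ℂ) :
    zetaPS (fun n => m * a n) = zetaPS a ^ m := by
  have hsum : (fun n => (m : ℂ) * a n) = ∑ _ ∈ range m, a := by ext n; simp
  rw [hsum, zetaPS_sum, prod_const, card_range]

theorem zetaPS_pow_mul_one_sub_C_mul_X (l : ℂ) :
    zetaPS (l ^ ·) * (1 - C l * X) = 1 := by
  refine eq_of_derivative_eq_mul (A := 0) ?_ (by simp) (by simp [constantCoeff_zetaPS])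
  have hmk : PowerSeries.mk (fun n => l ^ (n + 1)) = C l * PowerSeries.mk (l ^ ·) := by
    ext n; simp [pow_succ, mul_comm]
  have hd : derivative ℂ (1 - C l * X) = -C l := by
    ext n
    rw [coeff_derivative]
    rcases n with _ | n <;> simp [coeff_C]
  rw [Derivation.leibniz, derivative_zetaPS, hmk, smul_eq_mul, smul_eq_mul, hd]
  linear_combination (C l * zetaPS (l ^ ·)) * mk_pow_mul_one_sub_C_mul_X l

theorem zetaPS_neg_pow (l : ℂ) : zetaPS (-(l ^ ·)) = 1 - C l * X := by
  calc zetaPS (-(l ^ ·)) = zetaPS (-(l ^ ·)) * (zetaPS (l ^ ·) * (1 - C l * X)) := by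
        rw [zetaPS_pow_mul_one_sub_C_mul_X, mul_one]
    _ = 1 - C l * X := by rw [← mul_assoc, ← zetaPS_add, neg_add_cancel, zetaPS_zero, one_mul]

theorem IsExpansionOfRationalC.mul {F G : ℂ⟦X⟧} (hF : IsExpansionOfRationalC F)
    (hG : IsExpansionOfRationalC G) : IsExpansionOfRationalC (F * G) := by
  obtain ⟨P, Q, hQ, hFQ⟩ := hF
  obtain ⟨P', Q', hQ', hGQ'⟩ := hG
  refine ⟨P * P', Q * Q', mul_ne_zero hQ hQ', ?_⟩
  rw [Polynomial.coe_mul, Polynomial.coe_mul, ← hFQ, ← hGQ']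
  ring

theorem isExpansionOfRationalC_one : IsExpansionOfRationalC 1 :=
  ⟨1, 1, one_ne_zero, by simp⟩

theorem IsExpansionOfRationalC.pow {F : ℂ⟦X⟧} (hF : IsExpansionOfRationalC F) (m : ℕ) :
    IsExpansionOfRationalC (F ^ m) := by
  induction m with
  | zero => simpa using isExpansionOfRationalC_one
  | succ m ih => simpa [pow_succ] using ih.mul hF

theorem IsExpansionOfRationalC.prod {ι : Type*} (S : Finset ι) {F : ι → ℂ⟦X⟧}
    (hF : ∀ t ∈ S, IsExpansionOfRationalC (F t)) : IsExpansionOfRationalC (∏ t ∈ S, F t) := by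
  induction S using Finset.cons_induction with
  | empty => simpa using isExpansionOfRationalC_one
  | cons t S ht ih =>
    rw [prod_cons]
    exact (hF t (mem_cons_self t S)).mul (ih fun u hu => hF u (mem_cons_of_mem hu))

theorem isExpansionOfRationalC_zetaPS_pow (l : ℂ) : IsExpansionOfRationalC (zetaPS (l ^ ·)) := by
  refine ⟨1, 1 - Polynomial.C l * Polynomial.X, fun h => ?_, ?_⟩
  · simpa using congrArg (Polynomial.eval 0) h
  · simpa using zetaPS_pow_mul_one_sub_C_mul_X l

theorem isExpansionOfRationalC_zetaPS_neg_pow (l : ℂ) :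
    IsExpansionOfRationalC (zetaPS (-(l ^ ·))) :=
  ⟨1 - Polynomial.C l * Polynomial.X, 1, one_ne_zero, by simp [zetaPS_neg_pow]⟩

theorem isExpansionOfRationalC_zetaPS_intCast_mul_pow (c : ℤ) (l : ℂ) :
    IsExpansionOfRationalC (zetaPS fun n => c * l ^ n) := by
  obtain ⟨m, rfl | rfl⟩ := Int.eq_nat_or_neg c
  · simpa [zetaPS_natCast_mul] using (isExpansionOfRationalC_zetaPS_pow l).pow m
  · have h : (fun n => ((-m : ℤ) : ℂ) * l ^ n) = fun n => (m : ℂ) * (-(l ^ ·)) n := by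
      ext n; simp
    rw [h, zetaPS_natCast_mul]
    exact (isExpansionOfRationalC_zetaPS_neg_pow l).pow m

theorem isExpansionOfRationalC_zetaPS_of_eq_sum {ι : Type*} (S : Finset ι) (c : ι → ℤ)
    (l : ι → ℂ) {b : ℕ → ℂ} (hb : ∀ n, 1 ≤ n → b n = ∑ t ∈ S, c t * l t ^ n) :
    IsExpansionOfRationalC (zetaPS b) := by
  rw [zetaPS_congr (b := ∑ t ∈ S, fun n => c t * l t ^ n) (by simpa using hb), zetaPS_sum]
  exact IsExpansionOfRationalC.prod S fun t _ => isExpansionOfRationalC_zetaPS_intCast_mul_pow _ _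

theorem neg_one_pow_mul_pow_sub_one_pos {x : ℝ} (hx₁ : x ≠ 1) (hx₂ : x ≠ -1) {n : ℕ} (hn : n ≠ 0) :
    0 < (-1) ^ ((if -1 < x ∧ x < 1 then 1 else 0) + (if x < -1 then n else 0)) *
      (x ^ n - 1) := by
  rcases lt_trichotomy x (-1) with hlt | rfl | hgt
  · have hpow : 1 < (-x) ^ n := one_lt_pow₀ (by linarith) hn
    have hsign : (-1 : ℝ) ^ n ≤ 1 := (le_abs_self _).trans (abs_neg_one_pow n).le
    have : (-1 : ℝ) ^ n * (x ^ n - 1) = (-x) ^ n - (-1) ^ n := by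
      rw [neg_pow x]; ring
    rw [if_neg (by rintro ⟨h, -⟩; linarith), if_pos hlt, zero_add, this]
    linarith
  · exact absurd rfl hx₂
  rcases lt_trichotomy x 1 with hlt | rfl | hgt'
  · have : x ^ n < 1 := (le_abs_self _).trans_lt
      (by rw [abs_pow]; exact pow_lt_one₀ (abs_nonneg x) (abs_lt.mpr ⟨hgt, hlt⟩) hn)
    rw [if_pos ⟨hgt, hlt⟩, if_neg hgt.not_gt, add_zero, pow_one]
    linarith
  · exact absurd rfl hx₁
  · have : 1 < x ^ n := one_lt_pow₀ hgt' hn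
    rw [if_neg (by rintro ⟨-, h⟩; linarith), if_neg (by linarith), add_zero, pow_zero]
    linarith

theorem neg_one_pow_mul_prod_pow_sub_one_pos {ι : Type*} (s : Finset ι) {x : ι → ℝ}
    (hx : ∀ i ∈ s, x i ≠ 1 ∧ x i ≠ -1) {n : ℕ} (hn : n ≠ 0) :
    0 < (-1) ^ (#{i ∈ s | -1 < x i ∧ x i < 1} + #{i ∈ s | x i < -1} * n) *
      ∏ i ∈ s, (x i ^ n - 1) := by
  have hexp : #{i ∈ s | -1 < x i ∧ x i < 1} + #{i ∈ s | x i < -1} * n =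
      ∑ i ∈ s, ((if -1 < x i ∧ x i < 1 then 1 else 0) + (if x i < -1 then n else 0)) := by
    simp [sum_add_distrib, sum_ite]
  rw [hexp, ← prod_pow_eq_pow_sum, ← prod_mul_distrib]
  exact prod_pos fun i hi => neg_one_pow_mul_pow_sub_one_pos (hx i hi).1 (hx i hi).2 hn

theorem prod_filter_im_ne_zero_eq_normSq {ι : Type*} [Fintype ι] {ξ : ι → ℂ}
    (hconj : (univ.val.map fun i => conj (ξ i)) = univ.val.map ξ) {f : ℂ → ℂ}
    (hf : ∀ z, f (conj z) = conj (f z)) :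
    ∏ i with (ξ i).im ≠ 0, f (ξ i) = Complex.normSq (∏ i with 0 < (ξ i).im, f (ξ i)) := by
  set M := univ.val.map ξ
  have hM : M.map conj = M := by rw [Multiset.map_map]; exact hconj
  have hlower : M.filter (·.im < 0) = (M.filter (0 < ·.im)).map conj := by
    conv_lhs => rw [← hM]
    rw [Multiset.filter_map]
    simp
  have hsplit : M.filter (·.im ≠ 0) = M.filter (0 < ·.im) + M.filter (·.im < 0) := by
    rw [Multiset.filter_add_filter,
      (Multiset.filter_eq_nil (p := fun z : ℂ => 0 < z.im ∧ z.im < 0)).mpr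
        fun z _ h => h.1.asymm h.2, add_zero]
    exact Multiset.filter_congr fun z _ => ne_iff_lt_or_gt.trans or_comm
  have hprod : ∀ p : ℂ → Prop, [DecidablePred p] →
      ∏ i with p (ξ i), f (ξ i) = ((M.filter p).map f).prod := by
    intro p _
    simp [M, prod_eq_multiset_prod, Multiset.filter_map, Finset.filter_val]
  rw [hprod (·.im ≠ 0), hprod (0 < ·.im), hsplit, Multiset.map_add, Multiset.prod_add, hlower,
    Multiset.map_map, show f ∘ conj = conj ∘ f from funext hf, ← Multiset.map_map,
    ← map_multiset_prod, Complex.mul_conj]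

theorem exists_pos_prod_pow_sub_one_eq {ι : Type*} [Fintype ι] {ξ : ι → ℂ}
    (hroot : ∀ i, ∀ m : ℕ, 1 ≤ m → ξ i ^ m ≠ 1)
    (hconj : (univ.val.map fun i => conj (ξ i)) = univ.val.map ξ) {n : ℕ} (hn : 1 ≤ n) :
    ∃ r : ℝ, 0 < r ∧ ∏ i, (ξ i ^ n - 1) =
      (((-1) ^ (#{i | (ξ i).im = 0 ∧ -1 < (ξ i).re ∧ (ξ i).re < 1} +
        #{i | (ξ i).im = 0 ∧ (ξ i).re < -1} * n) * r : ℝ) : ℂ) := by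
  have hreal : ∀ i, (ξ i).im = 0 → ξ i = ((ξ i).re : ℂ) :=
    fun i h => Complex.ext rfl (by simp [h])
  have hre : ∀ i ∈ univ.filter fun i => (ξ i).im = 0, (ξ i).re ≠ 1 ∧ (ξ i).re ≠ -1 := by
    intro i hi
    have hξ := hreal i (mem_filter.mp hi).2
    refine ⟨fun h => hroot i 1 le_rfl ?_, fun h => hroot i 2 one_le_two ?_⟩ <;>
      rw [hξ, h] <;> norm_num
  have hR := neg_one_pow_mul_prod_pow_sub_one_pos _ hre (n := n) (by omega)
  simp only [filter_filter] at hR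
  set k := #{i | (ξ i).im = 0 ∧ -1 < (ξ i).re ∧ (ξ i).re < 1} +
    #{i | (ξ i).im = 0 ∧ (ξ i).re < -1} * n
  set R := ∏ i with (ξ i).im = 0, ((ξ i).re ^ n - 1)
  set P := ∏ i with 0 < (ξ i).im, (ξ i ^ n - 1)
  have hP : 0 < Complex.normSq P :=
    Complex.normSq_pos.mpr (prod_ne_zero_iff.mpr fun i _ => sub_ne_zero.mpr (hroot i n hn))
  have hRC : ∏ i with (ξ i).im = 0, (ξ i ^ n - 1) = (R : ℂ) := by
    simp only [R, Complex.ofReal_prod, Complex.ofReal_sub, Complex.ofReal_pow, Complex.ofReal_one]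
    exact prod_congr rfl fun i hi => by rw [← hreal i (mem_filter.mp hi).2]
  refine ⟨(-1) ^ k * R * Complex.normSq P, mul_pos hR hP, ?_⟩
  rw [← prod_filter_mul_prod_filter_not univ (fun i => (ξ i).im = 0), hRC,
    prod_filter_im_ne_zero_eq_normSq hconj (f := (· ^ n - 1)) (by simp)]
  have hsq : ((-1 : ℂ) ^ k) ^ 2 = 1 := by rw [← pow_mul, pow_mul']; simp
  push_cast
  linear_combination (-(R : ℂ) * Complex.normSq P) * hsq

theorem neg_one_pow_mul_pos_iff_even {k : ℕ} {r : ℝ} (hr : 0 < r) :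
    0 < (-1) ^ k * r ↔ Even k := by
  rcases k.even_or_odd with h | h
  · simp [h.neg_one_pow, hr, h]
  · simp [h.neg_one_pow, hr.le, Nat.not_even_iff_odd.mpr h]

theorem ofReal_norm_ofReal_neg_one_pow_mul {k : ℕ} {r : ℝ} (hr : 0 < r) :
    ((‖(((-1) ^ k * r : ℝ) : ℂ)‖ : ℝ) : ℂ) = (-1) ^ k * (((-1) ^ k * r : ℝ) : ℂ) := by
  have hsq : ((-1 : ℂ) ^ k) ^ 2 = 1 := by rw [← pow_mul, pow_mul']; simp
  rw [Complex.norm_real, Real.norm_eq_abs, abs_mul, abs_neg_one_pow, one_mul, abs_of_pos hr]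
  push_cast
  linear_combination (-(r : ℂ)) * hsq

/-- sign of a real sequence of multiplicative type, and rationality of
the zeta function of its absolute values. -/
theorem multiplicative_type_sign (s : ℕ) (ξ : Fin s → ℂ)
    (hroot : ∀ i : Fin s, ∀ m : ℕ, 1 ≤ m → ξ i ^ m ≠ 1)
    (hconj : (Finset.univ.val.map fun i => (starRingEnd ℂ) (ξ i)) = Finset.univ.val.map ξ)
    (a : ℕ → ℂ) (ha : ∀ n : ℕ, a n = ∏ i : Fin s, (ξ i ^ n - 1)) :
    (∀ n : ℕ, 1 ≤ n → (a n).im = 0 ∧ a n ≠ 0 ∧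
      (0 < (a n).re ↔
        Even (Nat.card {i : Fin s // (ξ i).im = 0 ∧ -1 < (ξ i).re ∧ (ξ i).re < 1} +
          Nat.card {i : Fin s // (ξ i).im = 0 ∧ (ξ i).re < -1} * n))) ∧
    IsExpansionOfRationalC (zetaPS fun n => ((‖a n‖ : ℝ) : ℂ)) := by
  set ε₁ := Nat.card {i : Fin s // (ξ i).im = 0 ∧ -1 < (ξ i).re ∧ (ξ i).re < 1}
  set ε₂ := Nat.card {i : Fin s // (ξ i).im = 0 ∧ (ξ i).re < -1}
  have hsign : ∀ n, 1 ≤ n → ∃ r : ℝ, 0 < r ∧ a n = (((-1) ^ (ε₁ + ε₂ * n) * r : ℝ) : ℂ) := by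
    simpa only [ε₁, ε₂, ha, Nat.card_eq_fintype_card, Fintype.card_subtype] using
      fun n hn => exists_pos_prod_pow_sub_one_eq hroot hconj hn
  refine ⟨fun n hn => ?_, ?_⟩
  · obtain ⟨r, hr, han⟩ := hsign n hn
    rw [han, Complex.ofReal_re, Complex.ofReal_im, Ne, Complex.ofReal_eq_zero]
    exact ⟨rfl, mul_ne_zero (pow_ne_zero _ (by norm_num)) hr.ne', neg_one_pow_mul_pos_iff_even hr⟩
  · refine isExpansionOfRationalC_zetaPS_of_eq_sum univ.powerset (fun t => (-1) ^ (ε₁ + #t))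
      (fun t => (-1) ^ ε₂ * ∏ i ∈ univ \ t, ξ i) fun n hn => ?_
    obtain ⟨r, hr, han⟩ := hsign n hn
    rw [han, ofReal_norm_ofReal_neg_one_pow_mul hr, ← han, ha, prod_sub, mul_sum]
    refine sum_congr rfl fun t _ => ?_
    simp only [prod_const_one, mul_one, mul_pow, prod_pow]
    push_cast
    ring
end

section
/- Let K be a field, let |·| be a nonarchimedean absolute value on K, and let ξ ∈ K be an element that is not a root of unity. Then: (1) if |ξ| > 1, then |ξ^n − 1| = |ξ|^n for all n ≥ 1 (so |ξ^n − 1| = c^n with c := |ξ| > 1); (2) if |ξ| ≤ 1, K has characteristic 0, and |m·1_K| = 1 for every nonzero integer m (i.e. the residue field of |·| has characteristic 0), then there is a gcd sequence (r_n) with values in ℝ_{>0} such that |ξ^n − 1| = r_n for all n ≥ 1; (3) if |ξ| ≤ 1, K has characteristic 0, and |p·1_K| < 1 for a prime number p (i.e. the residue field has characteristic p), then there are gcd sequences (r_n) with values in ℝ_{>0} and (s_n) with values in ℝ_{≥0} and of period coprime to p such that |ξ^n − 1| = r_n·|n|_p^{s_n} for all n ≥ 1; (4) if |ξ| ≤ 1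 and K has characteristic p > 0, then there is a gcd sequence (t_n) with values in ℝ_{≥0} and of period coprime to p such that |ξ^n − 1| = p^{−t_n·|n|_p^{−1}} for all n ≥ 1. -/
open scoped BigOperators
open Filter

/-!
Write `w n = v (ξ ^ n - 1)`. If `1 < v ξ`, the term `ξ ^ n` dominates. If `v ξ ≤ 1`, the identity
`ξ ^ (n * m) - 1 = (ξ ^ n - 1) * (1 + ξ ^ n + ⋯ + ξ ^ (n * (m - 1)))` and the ultrametric
inequality give `w (n * m) ≤ w n`, with `w (n * m) = w n * v m` as soon as `w n < v m`. The `n`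
with `w n < 1` are the multiples of the order `d` of `ξ` in the residue field, `d` is prime to the
residue characteristic, and `w n = 1` for all other `n`. In residue characteristic `0`, `w` is
therefore constant on the multiples of `d`. In residue characteristic `p` with `0 < v p`, the
values `w (d * p ^ j)` drop below `v p` at some `j = E`, after which multiplying `n` by `p`
multiplies `w n` by `v p = |p|ₚ ^ σ`; so `w n / |n|ₚ ^ σ` only depends on `gcd n (d * p ^ E)`.
In characteristic `p`, the Frobenius gives `w (p ^ e * m) = w m ^ p ^ e`.
-/

theorem isGcdSeq_ite_dvd {α : Type*} {d : ℕ} (hd : 0 < d) (a b : α) :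
    IsGcdSeq fun n => if d ∣ n then a else b :=
  ⟨d, hd, fun n _ => by simp [Nat.dvd_gcd_iff]⟩

theorem isGcdSeqCoprime_ite_dvd {α : Type*} {d p : ℕ} (hd : 0 < d) (hdp : d.Coprime p)
    (a b : α) :
    IsGcdSeqCoprime (fun n => if d ∣ n then a else b) p :=
  ⟨d, hd, hdp, fun n _ => by simp [Nat.dvd_gcd_iff]⟩

namespace IsNonarchimedean

variable {R : Type*} [CommRing R] {v : AbsoluteValue R ℝ} {x : R} {p : ℕ}

theorem apply_sub_le (hv : IsNonarchimedean v) (a b : R) : v (a - b) ≤ max (v a) (v b) := by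
  simpa [sub_eq_add_neg] using hv a (-b)

theorem apply_sum_le_of_forall_le (hv : IsNonarchimedean v) {ι : Type*} {s : Finset ι}
    {f : ι → R} {c : ℝ} (hc : 0 ≤ c) (hf : ∀ i ∈ s, v (f i) ≤ c) : v (∑ i ∈ s, f i) ≤ c :=
  Finset.sum_induction f (fun y => v y ≤ c) (fun a b ha hb => (hv a b).trans (max_le ha hb))
    (by simpa using hc) hf

variable [Nontrivial R]

theorem apply_sub_one_le_one (hv : IsNonarchimedean v) (hx : v x ≤ 1) : v (x - 1) ≤ 1 :=
  (hv.apply_sub_le x 1).trans (by simpa using hx)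

theorem apply_eq_one_of_apply_sub_one_lt_one (hv : IsNonarchimedean v) (h : v (x - 1) < 1) :
    v x = 1 := by
  simpa using hv.add_eq_right_of_lt (x := x - 1) (y := 1) (by simpa using h)

theorem apply_pow_sub_one_of_one_lt (hv : IsNonarchimedean v) (hx : 1 < v x) {n : ℕ}
    (hn : n ≠ 0) : v (x ^ n - 1) = v x ^ n := by
  have h : v (-1 : R) < v (x ^ n) := by simpa using one_lt_pow₀ hx hn
  rw [sub_eq_add_neg, hv.add_eq_left_of_lt h, map_pow]

theorem apply_pow_sub_one_le (hv : IsNonarchimedean v) (hx : v x ≤ 1) (m : ℕ) :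
    v (x ^ m - 1) ≤ v (x - 1) := by
  rw [← geom_sum_mul, map_mul, mul_comm]
  exact mul_le_of_le_one_right (v.nonneg _) (hv.apply_sum_le_of_forall_le zero_le_one fun i _ =>
    (map_pow v x i).trans_le (pow_le_one₀ (v.nonneg x) hx))

theorem apply_pow_sub_one_le_one (hv : IsNonarchimedean v) (hx : v x ≤ 1) (n : ℕ) :
    v (x ^ n - 1) ≤ 1 :=
  (hv.apply_pow_sub_one_le hx n).trans (hv.apply_sub_one_le_one hx)

theorem apply_pow_sub_one_eq_mul (hv : IsNonarchimedean v) (hx : v x ≤ 1) {m : ℕ}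
    (h : v (x - 1) < v (m : R)) : v (x ^ m - 1) = v (x - 1) * v (m : R) := by
  have hsum : ∑ i ∈ Finset.range m, x ^ i = m + ∑ i ∈ Finset.range m, (x ^ i - 1) := by
    simp [Finset.sum_sub_distrib]
  have hrest : v (∑ i ∈ Finset.range m, (x ^ i - 1)) < v (m : R) :=
    (hv.apply_sum_le_of_forall_le (v.nonneg _) fun i _ => hv.apply_pow_sub_one_le hx i).trans_lt
      h
  rw [← geom_sum_mul, map_mul, mul_comm, hsum, hv.add_eq_left_of_lt hrest]

theorem apply_natCast_eq_one_of_coprime (hv : IsNonarchimedean v) (hp : v (p : R) < 1) {m : ℕ}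
    (h : m.Coprime p) : v (m : R) = 1 := by
  obtain ⟨a, b, hab⟩ := Nat.isCoprime_iff_coprime.2 h
  have h1 : (a : R) * m + b * p = 1 := by exact_mod_cast congrArg (Int.cast : ℤ → R) hab
  refine le_antisymm hv.apply_natCast_le_one (not_lt.1 fun hm => ?_)
  have ham : v (a * m : R) < 1 := by
    rw [map_mul]; exact (mul_le_of_le_one_left (v.nonneg _) hv.apply_intCast_le_one).trans_lt hm
  have hbp : v (b * p : R) < 1 := by
    rw [map_mul]; exact (mul_le_of_le_one_left (v.nonneg _) hv.apply_intCast_le_one).trans_lt hp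
  simpa [h1] using (hv _ _).trans_lt (max_lt ham hbp)

theorem apply_natCast_eq_pow_padicValNat (hv : IsNonarchimedean v) (hp : p.Prime)
    (hp1 : v (p : R) < 1) {n : ℕ} (hn : n ≠ 0) : v (n : R) = v (p : R) ^ padicValNat p n := by
  have := Fact.mk hp
  obtain ⟨e, m, hpm, rfl⟩ := Nat.exists_eq_pow_mul_and_not_dvd hn p hp.ne_one
  have hm : m ≠ 0 := by rintro rfl; simp at hpm
  rw [padicValNat.mul (pow_ne_zero _ hp.ne_zero) hm, padicValNat.prime_pow,
    padicValNat.eq_zero_of_not_dvd hpm, add_zero, Nat.cast_mul, Nat.cast_pow, map_mul, map_pow,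
    hv.apply_natCast_eq_one_of_coprime hp1 (hp.coprime_iff_not_dvd.2 hpm).symm, mul_one]

theorem apply_pow_prime_sub_one_sub_pow_le (hv : IsNonarchimedean v) (hp : p.Prime)
    (hx : v x ≤ 1) : v (x ^ p - 1 - (x - 1) ^ p) ≤ v (p : R) * v (x - 1) := by
  have hx1 := hv.apply_sub_one_le_one hx
  have h := add_pow_prime_eq hp (x - 1) 1
  rw [sub_add_cancel, one_pow] at h
  rw [h, show ∀ a c : R, a + 1 + c - 1 - a = c from fun a c => by ring, map_mul, map_mul,
    map_mul, map_one, mul_one]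
  refine mul_le_of_le_one_right (by positivity)
    (hv.apply_sum_le_of_forall_le zero_le_one fun k _ => ?_)
  simp only [one_pow, mul_one, map_mul, map_pow]
  exact mul_le_one₀ (pow_le_one₀ (v.nonneg _) hx1) (v.nonneg _) hv.apply_natCast_le_one

theorem apply_pow_prime_sub_one_le (hv : IsNonarchimedean v) (hp : p.Prime) (hx : v x ≤ 1) :
    v (x ^ p - 1) ≤ v (x - 1) * max (v (p : R)) (v (x - 1)) := by
  have hx1 := hv.apply_sub_one_le_one hx
  have hpow : v ((x - 1) ^ p) ≤ v (x - 1) * max (v (p : R)) (v (x - 1)) := by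
    rw [map_pow]
    calc v (x - 1) ^ p ≤ v (x - 1) ^ 2 := pow_le_pow_of_le_one (v.nonneg _) hx1 hp.two_le
      _ ≤ _ := by rw [sq]; gcongr; exact le_max_right _ _
  have hrem : v (x ^ p - 1 - (x - 1) ^ p) ≤ v (x - 1) * max (v (p : R)) (v (x - 1)) := by
    rw [mul_comm]
    exact (hv.apply_pow_prime_sub_one_sub_pow_le hp hx).trans (by gcongr; exact le_max_left _ _)
  calc v (x ^ p - 1) = v ((x - 1) ^ p + (x ^ p - 1 - (x - 1) ^ p)) := by rw [add_sub_cancel]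
    _ ≤ _ := (hv _ _).trans (max_le hpow hrem)

theorem apply_sub_one_lt_one_of_apply_pow_prime_sub_one_lt_one (hv : IsNonarchimedean v)
    (hp : p.Prime) (hp1 : v (p : R) < 1) (hx : v x ≤ 1) (h : v (x ^ p - 1) < 1) :
    v (x - 1) < 1 := by
  refine (hv.apply_sub_one_le_one hx).lt_of_ne fun h1 => h.ne ?_
  have hpow : v ((x - 1) ^ p) = 1 := by rw [map_pow, h1, one_pow]
  have hrem : v (x ^ p - 1 - (x - 1) ^ p) < v ((x - 1) ^ p) := by
    rw [hpow]
    exact (hv.apply_pow_prime_sub_one_sub_pow_le hp hx).trans_lt (by rwa [h1, mul_one])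
  rw [← hpow, ← hv.add_eq_left_of_lt hrem, add_sub_cancel]

theorem exists_apply_pow_prime_pow_sub_one_lt (hv : IsNonarchimedean v) (hp : p.Prime)
    (hp0 : 0 < v (p : R)) (hp1 : v (p : R) < 1) (hx : v x ≤ 1) (hx1 : v (x - 1) < 1) :
    ∃ E : ℕ, v (x ^ p ^ E - 1) < v (p : R) := by
  set c := max (v (p : R)) (v (x - 1))
  have hbound : ∀ j : ℕ, v (x ^ p ^ j - 1) ≤ c ^ j := by
    intro j
    induction j with
    | zero => simpa using hx1.le
    | succ j ih =>
      have hxj : v (x ^ p ^ j) ≤ 1 := (map_pow v x _).trans_le (pow_le_one₀ (v.nonneg x) hx)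
      calc v (x ^ p ^ (j + 1) - 1) = v ((x ^ p ^ j) ^ p - 1) := by rw [pow_succ, pow_mul]
        _ ≤ v (x ^ p ^ j - 1) * max (v (p : R)) (v (x ^ p ^ j - 1)) :=
          hv.apply_pow_prime_sub_one_le hp hxj
        _ ≤ c ^ j * c := mul_le_mul ih (max_le_max le_rfl (hv.apply_pow_sub_one_le hx _))
          (by positivity) (pow_nonneg (le_max_of_le_left hp0.le) j)
        _ = c ^ (j + 1) := (pow_succ c j).symm
  obtain ⟨E, hE⟩ := exists_pow_lt_of_lt_one hp0 (max_lt hp1 hx1)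
  exact ⟨E, (hbound E).trans_lt hE⟩

theorem apply_pow_sub_one_eq_mul_of_lt_prime (hv : IsNonarchimedean v) (hp : p.Prime)
    (hp1 : v (p : R) < 1) (hx : v x ≤ 1) (h : v (x - 1) < v (p : R)) {m : ℕ} (hm : m ≠ 0) :
    v (x ^ m - 1) = v (x - 1) * v (m : R) := by
  induction m using Nat.strong_induction_on generalizing x with
  | _ m ih =>
  by_cases hpm : p ∣ m
  · obtain ⟨k, rfl⟩ := hpm
    have hk : k ≠ 0 := right_ne_zero_of_mul hm
    have hxp : v (x ^ p - 1) = v (x - 1) * v (p : R) := hv.apply_pow_sub_one_eq_mul hx h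
    have hxp1 : v (x ^ p - 1) < v (p : R) := by
      rw [hxp]
      exact mul_lt_of_lt_one_left ((v.nonneg _).trans_lt h) (h.trans hp1)
    have hxp2 : v (x ^ p) ≤ 1 := (map_pow v x p).trans_le (pow_le_one₀ (v.nonneg x) hx)
    rw [pow_mul, ih k (lt_mul_left (Nat.pos_of_ne_zero hk) hp.one_lt) hxp2 hxp1 hk, hxp,
      Nat.cast_mul, map_mul, mul_assoc]
  · have hvm : v (m : R) = 1 :=
      hv.apply_natCast_eq_one_of_coprime hp1 (hp.coprime_iff_not_dvd.2 hpm).symm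
    exact hv.apply_pow_sub_one_eq_mul hx (h.trans (hp1.trans_eq hvm.symm))

theorem apply_pow_sub_one_eq_mul_of_coprime (hv : IsNonarchimedean v) (hp : p.Prime)
    (hp1 : v (p : R) < 1) (hx : v x ≤ 1) (hx1 : v (x - 1) < 1) {j k : ℕ}
    (hj : v (x ^ j - 1) < v (p : R)) (hkj : k.Coprime j) (hk : k ≠ 0) :
    v (x ^ k - 1) = v (x - 1) * v (k : R) := by
  by_cases hpk : p ∣ k
  · have hvj : v (j : R) = 1 :=
      hv.apply_natCast_eq_one_of_coprime hp1 (Nat.Coprime.coprime_dvd_left hpk hkj).symm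
    have hxj : v (x ^ j - 1) = v (x - 1) := by
      rw [hv.apply_pow_sub_one_eq_mul hx (hvj ▸ hx1), hvj, mul_one]
    exact hv.apply_pow_sub_one_eq_mul_of_lt_prime hp hp1 hx (hxj ▸ hj) hk
  · have hvk : v (k : R) = 1 :=
      hv.apply_natCast_eq_one_of_coprime hp1 (hp.coprime_iff_not_dvd.2 hpk).symm
    exact hv.apply_pow_sub_one_eq_mul hx (hvk ▸ hx1)

theorem exists_apply_pow_sub_one_lt_one_iff_dvd (hv : IsNonarchimedean v)
    (h : ∃ k, 0 < k ∧ v (x ^ k - 1) < 1) : ∃ d, 0 < d ∧ ∀ n, v (x ^ n - 1) < 1 ↔ d ∣ n := by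
  classical
  obtain ⟨hd, hdx⟩ := Nat.find_spec h
  set d := Nat.find h
  have hxd : v (x ^ d) = 1 := hv.apply_eq_one_of_apply_sub_one_lt_one hdx
  have hmul : ∀ q, v (x ^ (d * q) - 1) < 1 := fun q =>
    (pow_mul x d q ▸ hv.apply_pow_sub_one_le hxd.le q).trans_lt hdx
  refine ⟨d, hd, fun n => ⟨fun hn => ?_, fun ⟨q, hq⟩ => hq ▸ hmul q⟩⟩
  have hxdq : v (x ^ (d * (n / d))) = 1 := hv.apply_eq_one_of_apply_sub_one_lt_one (hmul _)
  have hrem : v (x ^ (n % d) - 1) < 1 := by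
    have key :
        x ^ (d * (n / d)) * (x ^ (n % d) - 1) = (x ^ n - 1) - (x ^ (d * (n / d)) - 1) := by
      rw [mul_sub, ← pow_add, Nat.div_add_mod]
      ring
    have := (hv.apply_sub_le _ _).trans_lt (max_lt hn (hmul (n / d)))
    rwa [← key, map_mul, hxdq, one_mul] at this
  by_contra hdn
  exact Nat.find_min h (Nat.mod_lt n hd)
    ⟨Nat.pos_of_ne_zero fun h0 => hdn (Nat.dvd_of_mod_eq_zero h0), hrem⟩

theorem apply_pow_sub_one_eq_one_or_exists_lt_one_iff_dvd (hv : IsNonarchimedean v)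
    (hx : v x ≤ 1) :
    (∀ n, 0 < n → v (x ^ n - 1) = 1) ∨ ∃ d, 0 < d ∧ ∀ n, v (x ^ n - 1) < 1 ↔ d ∣ n := by
  by_cases h : ∃ k, 0 < k ∧ v (x ^ k - 1) < 1
  · exact .inr (hv.exists_apply_pow_sub_one_lt_one_iff_dvd h)
  · push Not at h
    exact .inl fun n hn => (hv.apply_pow_sub_one_le_one hx n).antisymm (h n hn)

theorem apply_pow_sub_one_eq_one_of_not_dvd (hv : IsNonarchimedean v) (hx : v x ≤ 1) {d n : ℕ}
    (hdvd : ∀ n, v (x ^ n - 1) < 1 ↔ d ∣ n) (hdn : ¬ d ∣ n) : v (x ^ n - 1) = 1 :=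
  (hv.apply_pow_sub_one_le_one hx n).antisymm (not_lt.1 ((hdvd n).not.2 hdn))

theorem coprime_of_forall_apply_pow_sub_one_lt_one_iff (hv : IsNonarchimedean v) (hp : p.Prime)
    (hp1 : v (p : R) < 1) (hx : v x ≤ 1) {d : ℕ} (hd : 0 < d)
    (hdvd : ∀ n, v (x ^ n - 1) < 1 ↔ d ∣ n) : d.Coprime p := by
  refine (hp.coprime_iff_not_dvd.2 fun ⟨k, hk⟩ => ?_).symm
  have hk0 : 0 < k := Nat.pos_of_mul_pos_left (hk ▸ hd)
  have hxk : v (x ^ k) ≤ 1 := (map_pow v x k).trans_le (pow_le_one₀ (v.nonneg x) hx)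
  have hdk : d ∣ k := (hdvd k).1 <|
    hv.apply_sub_one_lt_one_of_apply_pow_prime_sub_one_lt_one hp hp1 hxk
      (by rw [← pow_mul, mul_comm, ← hk]; exact (hdvd d).2 dvd_rfl)
  have := Nat.le_of_dvd hk0 hdk
  rw [hk] at this
  nlinarith [hp.two_le]

theorem padicAbs_rpow_eq_apply_natCast (hv : IsNonarchimedean v) (hp : p.Prime)
    (hp1 : v (p : R) < 1) {σ : ℝ} (hσ : (p : ℝ) ^ (-σ) = v (p : R)) {n : ℕ} (hn : n ≠ 0) :
    padicAbs p n ^ σ = v (n : R) := by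
  have hp0 : (0 : ℝ) ≤ p := Nat.cast_nonneg p
  rw [hv.apply_natCast_eq_pow_padicValNat hp hp1 hn, ← hσ, padicAbs, ← Real.rpow_natCast,
    Real.inv_rpow (by positivity), ← Real.rpow_mul hp0, ← Real.rpow_natCast, ← Real.rpow_mul hp0,
    neg_mul, Real.rpow_neg hp0, mul_comm]

theorem apply_pow_sub_one_eq_pow_of_charP [CharP R p] (hv : IsNonarchimedean v) (hp : p.Prime)
    {d n : ℕ} (hdp : d.Coprime p) (hdx : v (x ^ d - 1) < 1) (hn : n ≠ 0) (hdn : d ∣ n) :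
    v (x ^ n - 1) = v (x ^ d - 1) ^ p ^ padicValNat p n := by
  have := Fact.mk hp
  have hp1 : v (p : R) < 1 := by rw [CharP.cast_eq_zero, map_zero]; exact one_pos
  obtain ⟨e, m, hpm, rfl⟩ := Nat.exists_eq_pow_mul_and_not_dvd hn p hp.ne_one
  obtain ⟨k, rfl⟩ := ((hdp.pow_right e).dvd_of_dvd_mul_left hdn)
  have hk : v (k : R) = 1 := hv.apply_natCast_eq_one_of_coprime hp1
    (Nat.Coprime.coprime_dvd_left (dvd_mul_left k d) (hp.coprime_iff_not_dvd.2 hpm).symm)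
  have hfrob : x ^ (p ^ e * (d * k)) - 1 = ((x ^ d) ^ k - 1) ^ p ^ e := by
    rw [sub_pow_char_pow, one_pow, ← pow_mul, ← pow_mul, mul_comm, mul_assoc]
  have hxd : v (x ^ d) ≤ 1 := (hv.apply_eq_one_of_apply_sub_one_lt_one hdx).le
  rw [hfrob, map_pow, hv.apply_pow_sub_one_eq_mul hxd (hk ▸ hdx), hk, mul_one,
    padicValNat.mul (pow_ne_zero _ hp.ne_zero) (right_ne_zero_of_mul hn), padicValNat.prime_pow,
    padicValNat.eq_zero_of_not_dvd hpm, add_zero]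

theorem isGcdSeq_div_padicAbs_rpow [CharZero R] (hv : IsNonarchimedean v) (hp : p.Prime)
    (hp1 : v (p : R) < 1) {σ : ℝ} (hσ : (p : ℝ) ^ (-σ) = v (p : R)) (hx : v x ≤ 1) {d : ℕ}
    (hd : 0 < d) (hdvd : ∀ n, v (x ^ n - 1) < 1 ↔ d ∣ n) :
    IsGcdSeq fun n => v (x ^ n - 1) / padicAbs p n ^ (if d ∣ n then σ else 0) := by
  have hp0 : 0 < v (p : R) := v.pos (Nat.cast_ne_zero.2 hp.ne_zero)
  have hpow : ∀ n, v (x ^ n) ≤ 1 := fun n => (map_pow v x n).trans_le (pow_le_one₀ (v.nonneg x) hx)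
  obtain ⟨E, hE⟩ :=
    hv.exists_apply_pow_prime_pow_sub_one_lt hp hp0 hp1 (hpow d) ((hdvd d).2 dvd_rfl)
  refine ⟨d * p ^ E, Nat.mul_pos hd (pow_pos hp.pos E), fun n hn => ?_⟩
  obtain ⟨G, hGdef⟩ : ∃ G, G = n.gcd (d * p ^ E) := ⟨_, rfl⟩
  rw [← hGdef]
  have hG : 0 < G := hGdef ▸ Nat.gcd_pos_of_pos_left _ hn
  have hdG : d ∣ G ↔ d ∣ n := by simp [hGdef, Nat.dvd_gcd_iff, dvd_mul_right]
  by_cases hdn : d ∣ n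
  · obtain ⟨k, hk⟩ : G ∣ n := hGdef ▸ Nat.gcd_dvd_left _ _
    obtain ⟨j, hj⟩ : G ∣ d * p ^ E := hGdef ▸ Nat.gcd_dvd_right _ _
    have hk0 : k ≠ 0 := by rintro rfl; omega
    have hkj : k.Coprime j := by
      have h := Nat.coprime_div_gcd_div_gcd (hGdef ▸ hG)
      rwa [← hGdef, hk, hj, Nat.mul_div_cancel_left _ hG, Nat.mul_div_cancel_left _ hG] at h
    have key : v (x ^ n - 1) = v (x ^ G - 1) * v (k : R) := by
      rw [hk, pow_mul]
      refine hv.apply_pow_sub_one_eq_mul_of_coprime hp hp1 (hpow G) ((hdvd G).2 (hdG.2 hdn))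
        ?_ hkj hk0
      rwa [← pow_mul, ← hj, pow_mul]
    have hvk : v (k : R) ≠ 0 := (v.pos (Nat.cast_ne_zero.2 hk0)).ne'
    simp only [if_pos hdn, if_pos (hdG.2 hdn)]
    rw [hv.padicAbs_rpow_eq_apply_natCast hp hp1 hσ (by omega),
      hv.padicAbs_rpow_eq_apply_natCast hp hp1 hσ hG.ne', key, hk, Nat.cast_mul, map_mul,
      mul_div_mul_right _ _ hvk]
  · simp only [if_neg hdn, if_neg (mt hdG.1 hdn), Real.rpow_zero,
      hv.apply_pow_sub_one_eq_one_of_not_dvd hx hdvd hdn,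
      hv.apply_pow_sub_one_eq_one_of_not_dvd hx hdvd (mt hdG.1 hdn)]

variable {ξ : R}

theorem exists_gcdSeq_of_residueCharZero (hv : IsNonarchimedean v)
    (hξ : ∀ m : ℕ, 1 ≤ m → ξ ^ m ≠ 1) (hξ1 : v ξ ≤ 1) (hres : ∀ m : ℕ, m ≠ 0 → v (m : R) = 1) :
    ∃ r : ℕ → ℝ, IsGcdSeq r ∧ (∀ n : ℕ, 1 ≤ n → 0 < r n) ∧
      ∀ n : ℕ, 1 ≤ n → v (ξ ^ n - 1) = r n := by
  rcases hv.apply_pow_sub_one_eq_one_or_exists_lt_one_iff_dvd hξ1 with hone | ⟨d, hd, hdvd⟩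
  · exact ⟨fun _ => 1, ⟨1, le_rfl, fun _ _ => rfl⟩, fun _ _ => one_pos, hone⟩
  refine ⟨fun n => if d ∣ n then v (ξ ^ d - 1) else 1, isGcdSeq_ite_dvd hd _ _, fun n _ => ?_,
    fun n hn => ?_⟩
  · dsimp only
    split_ifs
    exacts [v.pos (sub_ne_zero.2 (hξ d hd)), one_pos]
  · dsimp only
    split_ifs with hdn
    · obtain ⟨k, rfl⟩ := hdn
      have hk : v (k : R) = 1 := hres k (by rintro rfl; omega)
      have hξd : v (ξ ^ d) ≤ 1 := (map_pow v ξ d).trans_le (pow_le_one₀ (v.nonneg ξ) hξ1)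
      rw [pow_mul, hv.apply_pow_sub_one_eq_mul hξd (hk ▸ (hdvd d).2 dvd_rfl), hk, mul_one]
    · exact hv.apply_pow_sub_one_eq_one_of_not_dvd hξ1 hdvd hdn

theorem exists_gcdSeq_of_residueCharP [CharZero R] (hv : IsNonarchimedean v) (hp : p.Prime)
    (hp1 : v (p : R) < 1) (hξ : ∀ m : ℕ, 1 ≤ m → ξ ^ m ≠ 1) (hξ1 : v ξ ≤ 1) :
    ∃ r s : ℕ → ℝ, IsGcdSeq r ∧ (∀ n : ℕ, 1 ≤ n → 0 < r n) ∧
      IsGcdSeqCoprime s p ∧ (∀ n : ℕ, 1 ≤ n → 0 ≤ s n) ∧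
      ∀ n : ℕ, 1 ≤ n → v (ξ ^ n - 1) = r n * padicAbs p n ^ s n := by
  rcases hv.apply_pow_sub_one_eq_one_or_exists_lt_one_iff_dvd hξ1 with hone | ⟨d, hd, hdvd⟩
  · exact ⟨fun _ => 1, fun _ => 0, ⟨1, le_rfl, fun _ _ => rfl⟩, fun _ _ => one_pos,
      ⟨1, le_rfl, Nat.coprime_one_left p, fun _ _ => rfl⟩, fun _ _ => le_rfl,
      fun n hn => by simp [hone n hn]⟩
  have hp' : (1 : ℝ) < p := by exact_mod_cast hp.one_lt
  have hp0 : 0 < v (p : R) := v.pos (Nat.cast_ne_zero.2 hp.ne_zero)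
  set σ := -Real.logb p (v (p : R))
  have hσ : (p : ℝ) ^ (-σ) = v (p : R) := by
    rw [neg_neg, Real.rpow_logb (by positivity) hp'.ne' hp0]
  have hσ0 : 0 ≤ σ := neg_nonneg.2 (Real.logb_nonpos hp' hp0.le hp1.le)
  have hpadic : ∀ n, 0 < padicAbs p n := fun n => by unfold padicAbs; positivity
  refine ⟨_, _, hv.isGcdSeq_div_padicAbs_rpow hp hp1 hσ hξ1 hd hdvd,
    fun n hn => div_pos (v.pos (sub_ne_zero.2 (hξ n hn))) (Real.rpow_pos_of_pos (hpadic n) _),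
    isGcdSeqCoprime_ite_dvd hd
      (hv.coprime_of_forall_apply_pow_sub_one_lt_one_iff hp hp1 hξ1 hd hdvd) _ _,
    fun n _ => ?_, fun n _ => (div_mul_cancel₀ _ (Real.rpow_pos_of_pos (hpadic n) _).ne').symm⟩
  split_ifs
  exacts [hσ0, le_rfl]

theorem exists_gcdSeq_of_charP [CharP R p] (hv : IsNonarchimedean v) (hp : p.Prime)
    (hξ : ∀ m : ℕ, 1 ≤ m → ξ ^ m ≠ 1) (hξ1 : v ξ ≤ 1) :
    ∃ t : ℕ → ℝ, IsGcdSeqCoprime t p ∧ (∀ n : ℕ, 1 ≤ n → 0 ≤ t n) ∧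
      ∀ n : ℕ, 1 ≤ n → v (ξ ^ n - 1) = (p : ℝ) ^ (-(t n) * (padicAbs p n)⁻¹) := by
  rcases hv.apply_pow_sub_one_eq_one_or_exists_lt_one_iff_dvd hξ1 with hone | ⟨d, hd, hdvd⟩
  · exact ⟨fun _ => 0, ⟨1, le_rfl, Nat.coprime_one_left p, fun _ _ => rfl⟩, fun _ _ => le_rfl,
      fun n hn => by simp [hone n hn]⟩
  have hp' : (1 : ℝ) < p := by exact_mod_cast hp.one_lt
  have hp1 : v (p : R) < 1 := by rw [CharP.cast_eq_zero, map_zero]; exact one_pos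
  have hdp := hv.coprime_of_forall_apply_pow_sub_one_lt_one_iff hp hp1 hξ1 hd hdvd
  have hdx := (hdvd d).2 dvd_rfl
  have hwd : 0 < v (ξ ^ d - 1) := v.pos (sub_ne_zero.2 (hξ d hd))
  refine ⟨fun n => if d ∣ n then -Real.logb p (v (ξ ^ d - 1)) else 0,
    isGcdSeqCoprime_ite_dvd hd hdp _ _, fun n _ => ?_, fun n hn => ?_⟩
  · dsimp only
    split_ifs
    exacts [neg_nonneg.2 (Real.logb_nonpos hp' hwd.le hdx.le), le_rfl]
  · dsimp only
    split_ifs with hdn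
    · rw [hv.apply_pow_sub_one_eq_pow_of_charP hp hdp hdx (by omega) hdn, padicAbs, inv_inv,
        neg_neg, Real.rpow_mul (by positivity), Real.rpow_logb (by positivity) hp'.ne' hwd,
        ← Real.rpow_natCast, Nat.cast_pow]
    · rw [neg_zero, zero_mul, Real.rpow_zero]
      exact hv.apply_pow_sub_one_eq_one_of_not_dvd hξ1 hdvd hdn

end IsNonarchimedean

/-- nonarchimedean absolute values of `ξⁿ − 1` in terms of gcd sequences. -/
theorem nonarchimedean_abs_of_pow_sub_one {K : Type*} [Field K]
    (v : AbsoluteValue K ℝ)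
    (hna : ∀ x y : K, v (x + y) ≤ max (v x) (v y))
    (ξ : K) (hξ : ∀ m : ℕ, 1 ≤ m → ξ ^ m ≠ 1) :
    (1 < v ξ → ∀ n : ℕ, 1 ≤ n → v (ξ ^ n - 1) = (v ξ) ^ n) ∧
    (v ξ ≤ 1 → CharZero K → (∀ m : ℤ, m ≠ 0 → v ((m : K)) = 1) →
      ∃ r : ℕ → ℝ, IsGcdSeq r ∧ (∀ n : ℕ, 1 ≤ n → 0 < r n) ∧
        ∀ n : ℕ, 1 ≤ n → v (ξ ^ n - 1) = r n) ∧
    (∀ p : ℕ, Nat.Prime p → v ξ ≤ 1 → CharZero K → v ((p : K)) < 1 →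
      ∃ r s : ℕ → ℝ, IsGcdSeq r ∧ (∀ n : ℕ, 1 ≤ n → 0 < r n) ∧
        IsGcdSeqCoprime s p ∧ (∀ n : ℕ, 1 ≤ n → 0 ≤ s n) ∧
        ∀ n : ℕ, 1 ≤ n → v (ξ ^ n - 1) = r n * padicAbs p n ^ s n) ∧
    (∀ p : ℕ, Nat.Prime p → v ξ ≤ 1 → CharP K p →
      ∃ t : ℕ → ℝ, IsGcdSeqCoprime t p ∧ (∀ n : ℕ, 1 ≤ n → 0 ≤ t n) ∧
        ∀ n : ℕ, 1 ≤ n → v (ξ ^ n - 1) = (p : ℝ) ^ (-(t n) * (padicAbs p n)⁻¹)) := by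
  have hv : IsNonarchimedean v := hna
  refine ⟨fun h n hn => hv.apply_pow_sub_one_of_one_lt h (by omega),
    fun hξ1 _ hres => hv.exists_gcdSeq_of_residueCharZero hξ hξ1 fun m hm => ?_,
    fun p hp hξ1 _ hp1 => hv.exists_gcdSeq_of_residueCharP hp hp1 hξ hξ1,
    fun p hp hξ1 _ => hv.exists_gcdSeq_of_charP hp hξ hξ1⟩
  simpa using hres m (Int.natCast_ne_zero.2 hm)
end
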